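/- arXiv:2504.14397 — 2 statements merged into one kernel-verified Lean document; each statement's English description precedes it below -/
import Mathlib

section
/- In the quotient algebra T_H(H⊗V⊗H)/(R'), where R' is the span of smash relations h⊗v⊗1_H − 1_H⊗τ(h⊗v), the degree n component is isomorphic as a right H-module to the free right H-module V^{⊗n} ⊗ H; more precisely, modulo (R') every element of the degree n component of T_H(H⊗V⊗H) is congruent to an element of (k1_H⊗V⊗k1_H)^{⊗_H (n-1)} ⊗_H (k1_H⊗V⊗H). -/
/-!
The quotient `Q = T_H(H⊗V⊗H)/(R')` acts on the right on `T(V) ⊗ H`: `h` by right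
multiplication on the factor `H`, and `v` through the twist, `x ⊗ c ↦ Σ x (c₁·v) ⊗ c₂`.
The smash relations hold for this action because `τ(ch ⊗ v) = Σ τ(c ⊗ h₁·v) h₂`.
Acting on `1 ⊗ 1` sends the class of `v₁ ⋯ vₙ h` back to `v₁ ⊗ ⋯ ⊗ vₙ ⊗ h`, so the map
`V^{⊗n} ⊗ H → Q`, `w ⊗ h ↦ w h`, is injective. Its image is the image of the degree-`n` piece,
since the relations `h v = Σ (h₁·v) h₂` move every letter of `H` to the right, where products
of such letters collapse to a single one.
-/

open scoped TensorProduct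

noncomputable section

namespace PaperTH

variable (k H V : Type*) [CommRing k] [Ring H] [AddCommGroup V] [Module k V]

section AlgebraPart
variable [Algebra k H]

/-- The free algebra on the `k`-module `H ⊕ V`; the tensor algebra over `H` of the free
`H`-bimodule `H ⊗ V ⊗ H` is the quotient of this by the relations `baseSet` below. -/
abbrev TF := TensorAlgebra k (H × V)

/-- The `H`-generators. -/
noncomputable def jH : H →ₗ[k] TF k H V := (TensorAlgebra.ι k).comp (LinearMap.inl k H V)

/-- The `V`-generators (degree 1). -/
noncomputable def jV : V →ₗ[k] TF k H V := (TensorAlgebra.ι k).comp (LinearMap.inr k H V)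

/-- Presentation relation: the relations making `H ↪ T_H(H⊗V⊗H)` an algebra map, together
with an arbitrary set `Q` of further relations set equal to `0`.  Thus
`RingQuot (presRel Q)` models `T_H(H⊗V⊗H)/(Q)`. -/
inductive presRel (Q : Set (TF k H V)) : TF k H V → TF k H V → Prop
  | mulH (h h' : H) : presRel Q (jH k H V h * jH k H V h') (jH k H V (h * h'))
  | oneH : presRel Q (jH k H V 1) 1
  | mem {x : TF k H V} : x ∈ Q → presRel Q x 0

/-- Elements generating the two-sided ideal presenting `T_H(H⊗V⊗H)` from the free algebra. -/
def baseSet : Set (TF k H V) :=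
  {x | (∃ h h', x = jH k H V h * jH k H V h' - jH k H V (h * h')) ∨ x = jH k H V 1 - 1}

/-- The two-sided ideal generated by a set, as a `k`-submodule. -/
noncomputable def twoSidedSpan {A : Type*} [Ring A] [Algebra k A] (s : Set A) :
    Submodule k A :=
  Submodule.span k {x | ∃ a p b, p ∈ s ∧ x = a * p * b}

/-- Degree-0 piece `H` (with its unit). -/
noncomputable def HF : Submodule k (TF k H V) := LinearMap.range (jH k H V) ⊔ 1

/-- The `V`-part. -/
noncomputable def VF : Submodule k (TF k H V) := LinearMap.range (jV k H V)

/-- Degree-`n` piece of `T_H(H⊗V⊗H)`: sums of `h₀ v₁ h₁ ⋯ v_n h_n`. -/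
noncomputable def gradeF (n : ℕ) : Submodule k (TF k H V) :=
  HF k H V * (VF k H V * HF k H V) ^ n

/-- Filtration `F_n`. -/
noncomputable def filtF (n : ℕ) : Submodule k (TF k H V) := ⨆ i ≤ n, gradeF k H V i

/-- `F_{n-1}` (with `F_{-1} = ⊥`). -/
noncomputable def filtFpred (n : ℕ) : Submodule k (TF k H V) := ⨆ i < n, gradeF k H V i

/-- The image of `V ⊗ V` in degree 2. -/
noncomputable def iVV : V ⊗[k] V →ₗ[k] TF k H V :=
  (LinearMap.mul' k (TF k H V)).comp (TensorProduct.map (jV k H V) (jV k H V))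

/-- The image of `V ⊗ H` in degree 1. -/
noncomputable def iVH : V ⊗[k] H →ₗ[k] TF k H V :=
  (LinearMap.mul' k (TF k H V)).comp (TensorProduct.map (jV k H V) (jH k H V))

end AlgebraPart

section BialgebraPart
variable [Bialgebra k H]

/-- The twisting map `τ : H ⊗ V → V ⊗ H`, `h ⊗ v ↦ Σ (h₁ · v) ⊗ h₂`. -/
noncomputable def twistTau (act : H ⊗[k] V →ₗ[k] V) :
    H ⊗[k] V →ₗ[k] V ⊗[k] H :=
  (TensorProduct.map act LinearMap.id)
    ∘ₗ (TensorProduct.assoc k H V H).symm.toLinearMap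
    ∘ₗ (TensorProduct.map LinearMap.id (TensorProduct.comm k H V).toLinearMap)
    ∘ₗ (TensorProduct.assoc k H H V).toLinearMap
    ∘ₗ (TensorProduct.map Coalgebra.comul LinearMap.id)

/-- The diagonal action of `H` on `V ⊗ V`. -/
noncomputable def diag2 (act : H ⊗[k] V →ₗ[k] V) :
    H ⊗[k] (V ⊗[k] V) →ₗ[k] V ⊗[k] V :=
  (TensorProduct.map act act)
    ∘ₗ (TensorProduct.tensorTensorTensorComm k H H V V).toLinearMap
    ∘ₗ (TensorProduct.map Coalgebra.comul LinearMap.id)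

/-- The span of the smash relations `h ⊗ v ⊗ 1 − 1 ⊗ τ(h ⊗ v)`, viewed inside `TF`. -/
noncomputable def smashSet (act : H ⊗[k] V →ₗ[k] V) : Set (TF k H V) :=
  (Submodule.span k {x | ∃ (h : H) (v : V),
    x = jH k H V h * jV k H V v - iVH k H V (twistTau k H V act (h ⊗ₜ[k] v))} :
      Submodule k (TF k H V))

end BialgebraPart

end PaperTH

end

open PaperTH

theorem mul_mul_pow_le_pow_mul {M : Type*} [Monoid M] [Preorder M] [MulLeftMono M]
    [MulRightMono M] {a b : M} (hab : a * b ≤ b * a) (haa : a * a ≤ a) (n : ℕ) :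
    a * (b * a) ^ n ≤ b ^ n * a := by
  induction n with
  | zero => simp
  | succ n ih =>
    calc a * (b * a) ^ (n + 1) = a * (b * a) ^ n * (b * a) := by rw [pow_succ, mul_assoc]
      _ ≤ b ^ n * a * (b * a) := mul_le_mul_left ih _
      _ = b ^ n * (a * b) * a := by simp only [mul_assoc]
      _ ≤ b ^ n * (b * a) * a := mul_le_mul_left (mul_le_mul_right hab _) _
      _ = b ^ (n + 1) * (a * a) := by simp only [pow_succ, mul_assoc]
      _ ≤ b ^ (n + 1) * a := mul_le_mul_right haa _

theorem pow_mul_le_mul_mul_pow {M : Type*} [Monoid M] [Preorder M] [MulLeftMono M]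
    [MulRightMono M] {a b : M} (ha : 1 ≤ a) (n : ℕ) : b ^ n * a ≤ a * (b * a) ^ n := by
  have hsemi : SemiconjBy a (b * a) (a * b) := (mul_assoc a b a).symm
  rw [hsemi.pow_right n]
  exact mul_le_mul_left (pow_le_pow_left' (le_mul_of_one_le_left' ha) n) a

theorem LinearMap.range_mul'_comp_map {R A M N : Type*} [CommSemiring R] [Semiring A]
    [Algebra R A] [AddCommMonoid M] [Module R M] [AddCommMonoid N] [Module R N]
    (f : M →ₗ[R] A) (g : N →ₗ[R] A) :
    LinearMap.range (LinearMap.mul' R A ∘ₗ TensorProduct.map f g)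
      = LinearMap.range f * LinearMap.range g := by
  have hfac : LinearMap.mul' R A ∘ₗ TensorProduct.map f g
      = Submodule.mulMap (LinearMap.range f) (LinearMap.range g)
          ∘ₗ TensorProduct.map f.rangeRestrict g.rangeRestrict :=
    TensorProduct.ext' fun _ _ => rfl
  rw [hfac, LinearMap.range_comp_of_range_eq_top _
    (LinearMap.range_eq_top.mpr (TensorProduct.map_surjective f.surjective_rangeRestrict
      g.surjective_rangeRestrict)), Submodule.mulMap_range]

theorem TensorPower.range_toTensorAlgebra {R M : Type*} [CommSemiring R] [AddCommMonoid M]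
    [Module R M] (n : ℕ) :
    LinearMap.range (TensorPower.toTensorAlgebra (R := R) (M := M) (n := n))
      = LinearMap.range (TensorAlgebra.ι R) ^ n := by
  rw [LinearMap.range_eq_map, ← PiTensorProduct.span_tprod_eq_top, Submodule.map_span,
    Submodule.pow_eq_span_pow_set]
  congr 1
  ext x
  simp only [Set.mem_image, Set.mem_range, exists_exists_eq_and, Set.mem_pow,
    TensorPower.toTensorAlgebra_tprod, TensorAlgebra.tprod_apply]
  constructor
  · rintro ⟨w, rfl⟩
    exact ⟨fun i => ⟨_, w i, rfl⟩, rfl⟩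
  · rintro ⟨f, rfl⟩
    choose w hw using fun i => (f i).2
    exact ⟨w, by simp only [hw]⟩

theorem TensorAlgebra.toDirectSum_toTensorAlgebra {R M : Type*} [CommSemiring R]
    [AddCommMonoid M] [Module R M] {n : ℕ} (x : ⨂[R]^n M) :
    TensorAlgebra.toDirectSum (TensorPower.toTensorAlgebra x) = DirectSum.of _ n x := by
  induction x using PiTensorProduct.induction_on with
  | smul_tprod r w =>
    rw [map_smul, map_smul, TensorPower.toTensorAlgebra_tprod,
      TensorAlgebra.toDirectSum_tensorPower_tprod, DirectSum.of_smul]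
  | add a b ha hb => rw [map_add, map_add, ha, hb, map_add]

theorem TensorPower.rTensor_toTensorAlgebra_injective {R M : Type*} [CommSemiring R]
    [AddCommMonoid M] [Module R M] (N : Type*) [AddCommMonoid N] [Module R N] (n : ℕ) :
    Function.Injective ((TensorPower.toTensorAlgebra (R := R) (M := M) (n := n)).rTensor N) := by
  let proj : TensorAlgebra R M →ₗ[R] ⨂[R]^n M :=
    DirectSum.component R ℕ (fun i => ⨂[R]^i M) n ∘ₗ TensorAlgebra.toDirectSum.toLinearMap
  have hleft : proj ∘ₗ TensorPower.toTensorAlgebra = LinearMap.id :=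
    LinearMap.ext fun x => by
      simp [proj, TensorAlgebra.toDirectSum_toTensorAlgebra, ← DirectSum.lof_eq_of R]
  refine Function.LeftInverse.injective (g := proj.rTensor N) fun z => ?_
  rw [← LinearMap.comp_apply, ← LinearMap.rTensor_comp, hleft, LinearMap.rTensor_id,
    LinearMap.id_apply]

namespace PaperTH

open TensorProduct

section TwistedRightAction

variable {k H V : Type*} [CommRing k] [Ring H] [Bialgebra k H] [AddCommGroup V] [Module k V]
  (act : H ⊗[k] V →ₗ[k] V)

theorem twistTau_tmul_eq_sum {h : H} {ι : Type*} (r : Coalgebra.Repr k h ι) (v : V) :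
    twistTau k H V act (h ⊗ₜ v) = ∑ i ∈ r.index, act (r.left i ⊗ₜ v) ⊗ₜ r.right i := by
  simp only [twistTau, LinearMap.comp_apply, map_tmul, LinearMap.id_apply, ← r.eq, sum_tmul,
    map_sum, LinearEquiv.coe_coe, assoc_tmul, comm_tmul, assoc_symm_tmul]

theorem twistTau_one_tmul (hone : ∀ v : V, act ((1 : H) ⊗ₜ[k] v) = v) (v : V) :
    twistTau k H V act (1 ⊗ₜ v) = v ⊗ₜ 1 := by
  simp [twistTau, Bialgebra.comul_one, Algebra.TensorProduct.one_def, hone]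

theorem twistTau_mul_tmul
    (hmul : ∀ (h h' : H) (v : V), act ((h * h') ⊗ₜ[k] v) = act (h ⊗ₜ[k] act (h' ⊗ₜ[k] v)))
    (c : H) {h : H} {ι : Type*} (r : Coalgebra.Repr k h ι) (v : V) :
    twistTau k H V act ((c * h) ⊗ₜ v)
      = ∑ i ∈ r.index, (LinearMap.mulRight k (r.right i)).lTensor V
          (twistTau k H V act (c ⊗ₜ act (r.left i ⊗ₜ v))) := by
  let rc := Coalgebra.Repr.arbitrary k c
  simp only [twistTau_tmul_eq_sum act (rc.mul r), twistTau_tmul_eq_sum act rc, map_sum,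
    LinearMap.lTensor_tmul, LinearMap.mulRight_apply, Coalgebra.Repr.mul_index,
    Coalgebra.Repr.mul_left, Coalgebra.Repr.mul_right, Finset.sum_product, hmul]
  exact Finset.sum_comm

def rightActH : H →ₗ[k] Module.End k (TensorAlgebra k V ⊗[k] H) :=
  LinearMap.lTensorHom (TensorAlgebra k V) ∘ₗ (LinearMap.mul k H).flip

theorem rightActH_tmul (h : H) (x : TensorAlgebra k V) (c : H) :
    rightActH h (x ⊗ₜ[k] c) = x ⊗ₜ (c * h) := rfl

theorem rightActH_mul (h h' : H) :
    (rightActH (h * h') : Module.End k (TensorAlgebra k V ⊗[k] H))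
      = rightActH h' * rightActH h :=
  TensorProduct.ext' fun x c => by simp only [Module.End.mul_apply, rightActH_tmul, mul_assoc]

theorem rightActH_one : (rightActH (1 : H) : Module.End k (TensorAlgebra k V ⊗[k] H)) = 1 :=
  TensorProduct.ext' fun x c => by simp only [rightActH_tmul, mul_one, Module.End.one_apply]

noncomputable def rightActV : V →ₗ[k] Module.End k (TensorAlgebra k V ⊗[k] H) :=
  (TensorProduct.curry
    ((LinearMap.mul' k (TensorAlgebra k V) ∘ₗ (TensorAlgebra.ι k).lTensor _).rTensor H
      ∘ₗ (TensorProduct.assoc k _ V H).symm.toLinearMap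
      ∘ₗ (twistTau k H V act).lTensor _
      ∘ₗ (TensorProduct.assoc k _ H V).toLinearMap)).flip

theorem rightActV_tmul (v : V) (x : TensorAlgebra k V) (c : H) :
    rightActV act v (x ⊗ₜ c)
      = (LinearMap.mulLeft k x ∘ₗ TensorAlgebra.ι k).rTensor H (twistTau k H V act (c ⊗ₜ v)) := by
  simp only [rightActV, LinearMap.flip_apply, TensorProduct.curry_apply, LinearMap.comp_apply,
    LinearEquiv.coe_coe, assoc_tmul, LinearMap.lTensor_tmul]
  induction twistTau k H V act (c ⊗ₜ v) using TensorProduct.induction_on with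
  | zero => simp
  | tmul w b => simp
  | add a b ha hb => simp only [tmul_add, map_add, ha, hb]

theorem rightActV_tmul_one (hone : ∀ v : V, act ((1 : H) ⊗ₜ[k] v) = v) (v : V)
    (x : TensorAlgebra k V) :
    rightActV act v (x ⊗ₜ (1 : H)) = (x * TensorAlgebra.ι k v) ⊗ₜ 1 := by
  rw [rightActV_tmul, twistTau_one_tmul act hone]
  rfl

theorem rightActV_mul_rightActH
    (hmul : ∀ (h h' : H) (v : V), act ((h * h') ⊗ₜ[k] v) = act (h ⊗ₜ[k] act (h' ⊗ₜ[k] v)))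
    (v : V) {h : H} {ι : Type*} (r : Coalgebra.Repr k h ι) :
    rightActV act v * rightActH h
      = ∑ i ∈ r.index, rightActH (r.right i) * rightActV act (act (r.left i ⊗ₜ v)) := by
  refine TensorProduct.ext' fun x c => ?_
  simp only [Module.End.mul_apply, LinearMap.sum_apply, rightActH_tmul, rightActV_tmul,
    twistTau_mul_tmul act hmul c r, map_sum]
  refine Finset.sum_congr rfl fun i _ => ?_
  rw [← LinearMap.comp_apply, LinearMap.rTensor_comp_lTensor, ← LinearMap.lTensor_comp_rTensor]
  rfl

noncomputable def smashRep : TF k H V →ₐ[k] (Module.End k (TensorAlgebra k V ⊗[k] H))ᵐᵒᵖ :=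
  TensorAlgebra.lift k ((MulOpposite.opLinearEquiv k).toLinearMap
    ∘ₗ (rightActH ∘ₗ LinearMap.fst k H V + rightActV act ∘ₗ LinearMap.snd k H V))

theorem smashRep_jH (h : H) : smashRep act (jH k H V h) = MulOpposite.op (rightActH h) := by
  simp [smashRep, jH]

theorem smashRep_jV (v : V) : smashRep act (jV k H V v) = MulOpposite.op (rightActV act v) := by
  simp [smashRep, jV]

theorem smashRep_smash
    (hmul : ∀ (h h' : H) (v : V), act ((h * h') ⊗ₜ[k] v) = act (h ⊗ₜ[k] act (h' ⊗ₜ[k] v)))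
    (h : H) (v : V) :
    smashRep act (jH k H V h * jV k H V v)
      = smashRep act (iVH k H V (twistTau k H V act (h ⊗ₜ v))) := by
  let r := Coalgebra.Repr.arbitrary k h
  simp only [twistTau_tmul_eq_sum act r, map_sum, map_mul, iVH, LinearMap.comp_apply, map_tmul,
    LinearMap.mul'_apply, smashRep_jH, smashRep_jV, ← MulOpposite.op_mul, ← Finset.op_sum,
    rightActV_mul_rightActH act hmul v r]

theorem smashRep_eq_of_presRel
    (hmul : ∀ (h h' : H) (v : V), act ((h * h') ⊗ₜ[k] v) = act (h ⊗ₜ[k] act (h' ⊗ₜ[k] v)))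
    {x y : TF k H V} (hxy : presRel k H V (smashSet k H V act) x y) :
    smashRep act x = smashRep act y := by
  induction hxy with
  | mulH h h' => simp only [map_mul, smashRep_jH, ← MulOpposite.op_mul, rightActH_mul]
  | oneH => rw [smashRep_jH, rightActH_one, MulOpposite.op_one, map_one]
  | mem hx =>
    rw [map_zero]
    induction hx using Submodule.span_induction with
    | mem _ hz =>
      obtain ⟨h, v, rfl⟩ := hz
      rw [map_sub, smashRep_smash act hmul, sub_self]
    | zero => exact map_zero _
    | add a b _ _ ha hb => rw [map_add, ha, hb, add_zero]
    | smul c a _ ha => rw [map_smul, ha, smul_zero]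

noncomputable def smashRepQuot
    (hmul : ∀ (h h' : H) (v : V), act ((h * h') ⊗ₜ[k] v) = act (h ⊗ₜ[k] act (h' ⊗ₜ[k] v))) :
    RingQuot (presRel k H V (smashSet k H V act))
      →ₐ[k] (Module.End k (TensorAlgebra k V ⊗[k] H))ᵐᵒᵖ :=
  RingQuot.liftAlgHom k ⟨smashRep act, fun _ _ => smashRep_eq_of_presRel act hmul⟩

noncomputable def liftV : TensorAlgebra k V →ₐ[k] TF k H V := TensorAlgebra.lift k (jV k H V)

theorem unop_smashRep_liftV_tmul_one (hone : ∀ v : V, act ((1 : H) ⊗ₜ[k] v) = v)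
    (x y : TensorAlgebra k V) :
    (smashRep act (liftV x)).unop (y ⊗ₜ (1 : H)) = (y * x) ⊗ₜ 1 := by
  induction x using TensorAlgebra.induction generalizing y with
  | algebraMap r =>
    rw [AlgHom.commutes, AlgHom.commutes]
    simp [Algebra.algebraMap_eq_smul_one, smul_tmul']
  | ι v =>
    simp [liftV, smashRep_jV, rightActV_tmul_one act hone]
  | mul a b ha hb =>
    rw [map_mul, map_mul, MulOpposite.unop_mul, Module.End.mul_apply, ha, hb, mul_assoc]
  | add a b ha hb =>
    rw [map_add, map_add, MulOpposite.unop_add, LinearMap.add_apply, ha, hb, mul_add, add_tmul]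

end TwistedRightAction

section Quotient

variable {k H V : Type*} [CommRing k] [Ring H] [Bialgebra k H] [AddCommGroup V] [Module k V]
  (act : H ⊗[k] V →ₗ[k] V)

local notation "π" => RingQuot.mkAlgHom k (presRel k H V (smashSet k H V act))

noncomputable def toQuot :
    TensorAlgebra k V ⊗[k] H →ₗ[k] RingQuot (presRel k H V (smashSet k H V act)) :=
  LinearMap.mul' k _ ∘ₗ
    TensorProduct.map ((π).toLinearMap ∘ₗ (liftV (H := H)).toLinearMap)
      ((π).toLinearMap ∘ₗ jH k H V)

theorem toQuot_tmul (x : TensorAlgebra k V) (h : H) :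
    toQuot act (x ⊗ₜ h) = π (liftV x) * π (jH k H V h) := rfl

noncomputable def quotRetraction
    (hmul : ∀ (h h' : H) (v : V), act ((h * h') ⊗ₜ[k] v) = act (h ⊗ₜ[k] act (h' ⊗ₜ[k] v))) :
    RingQuot (presRel k H V (smashSet k H V act)) →ₗ[k] TensorAlgebra k V ⊗[k] H :=
  LinearMap.applyₗ (1 ⊗ₜ 1) ∘ₗ (MulOpposite.opLinearEquiv k).symm.toLinearMap
    ∘ₗ (smashRepQuot act hmul).toLinearMap

theorem quotRetraction_toQuot (hone : ∀ v : V, act ((1 : H) ⊗ₜ[k] v) = v)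
    (hmul : ∀ (h h' : H) (v : V), act ((h * h') ⊗ₜ[k] v) = act (h ⊗ₜ[k] act (h' ⊗ₜ[k] v)))
    (z : TensorAlgebra k V ⊗[k] H) : quotRetraction act hmul (toQuot act z) = z := by
  induction z using TensorProduct.induction_on with
  | zero => simp
  | tmul x h =>
    simp [quotRetraction, toQuot_tmul, smashRepQuot, RingQuot.liftAlgHom_mkAlgHom_apply,
      smashRep_jH, unop_smashRep_liftV_tmul_one act hone, rightActH_tmul]
  | add a b ha hb => rw [map_add, map_add, ha, hb]

local notation "πₗ" => AlgHom.toLinearMap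
  (RingQuot.mkAlgHom k (presRel k H V (smashSet k H V act)))

theorem mkAlgHom_jH_mul_jH (h h' : H) :
    π (jH k H V h) * π (jH k H V h') = π (jH k H V (h * h')) :=
  (map_mul _ _ _).symm.trans (RingQuot.mkAlgHom_rel k (presRel.mulH h h'))

theorem mkAlgHom_jH_mul_jV (h : H) (v : V) :
    π (jH k H V h) * π (jV k H V v) = π (iVH k H V (twistTau k H V act (h ⊗ₜ v))) := by
  rw [← map_mul, ← sub_eq_zero, ← map_sub, ← map_zero π]
  exact RingQuot.mkAlgHom_rel k (presRel.mem (Submodule.subset_span ⟨h, v, rfl⟩))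

noncomputable def degreeMap (n : ℕ) :
    (⨂[k]^n V) ⊗[k] H →ₗ[k] RingQuot (presRel k H V (smashSet k H V act)) :=
  toQuot act ∘ₗ TensorPower.toTensorAlgebra.rTensor H

theorem degreeMap_tmul_mul (n : ℕ) (x : ⨂[k]^n V) (h h' : H) :
    degreeMap act n (x ⊗ₜ (h * h')) = degreeMap act n (x ⊗ₜ h) * π (jH k H V h') := by
  simp only [degreeMap, LinearMap.comp_apply, LinearMap.rTensor_tmul, toQuot_tmul, mul_assoc,
    mkAlgHom_jH_mul_jH]

theorem degreeMap_injective (hone : ∀ v : V, act ((1 : H) ⊗ₜ[k] v) = v)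
    (hmul : ∀ (h h' : H) (v : V), act ((h * h') ⊗ₜ[k] v) = act (h ⊗ₜ[k] act (h' ⊗ₜ[k] v)))
    (n : ℕ) : Function.Injective (degreeMap act n) :=
  Function.LeftInverse.injective (quotRetraction_toQuot act hone hmul) |>.comp
    (TensorPower.rTensor_toTensorAlgebra_injective H n)

theorem map_HF_eq_range : Submodule.map πₗ (HF k H V) = LinearMap.range (πₗ ∘ₗ jH k H V) := by
  refine le_antisymm ?_ ?_
  · rw [HF, Submodule.map_sup, Submodule.map_one, LinearMap.range_comp, sup_le_iff]
    refine ⟨le_rfl, Submodule.one_le.mpr ⟨jH k H V 1, ⟨1, rfl⟩, ?_⟩⟩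
    exact (RingQuot.mkAlgHom_rel k presRel.oneH).trans (map_one _)
  · rw [LinearMap.range_comp]
    exact Submodule.map_mono le_sup_left

theorem one_le_map_HF : 1 ≤ Submodule.map πₗ (HF k H V) := by
  rw [← Submodule.map_one π]
  exact Submodule.map_mono le_sup_right

theorem map_HF_mul_map_HF_le :
    Submodule.map πₗ (HF k H V) * Submodule.map πₗ (HF k H V) ≤ Submodule.map πₗ (HF k H V) := by
  rw [map_HF_eq_range, Submodule.mul_le]
  rintro _ ⟨h, rfl⟩ _ ⟨h', rfl⟩
  exact ⟨h * h', (mkAlgHom_jH_mul_jH act h h').symm⟩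

theorem map_HF_mul_map_VF_le :
    Submodule.map πₗ (HF k H V) * Submodule.map πₗ (VF k H V)
      ≤ Submodule.map πₗ (VF k H V) * Submodule.map πₗ (HF k H V) := by
  have hVH : LinearMap.range (iVH k H V) ≤ VF k H V * HF k H V := by
    rw [iVH, LinearMap.range_mul'_comp_map]
    exact mul_le_mul_right le_sup_left _
  rw [Submodule.mul_le]
  intro x hx y hy
  rw [map_HF_eq_range] at hx
  obtain ⟨h, rfl⟩ := hx
  obtain ⟨_, ⟨v, rfl⟩, rfl⟩ := hy
  rw [LinearMap.comp_apply, AlgHom.toLinearMap_apply, AlgHom.toLinearMap_apply,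
    mkAlgHom_jH_mul_jV, ← Submodule.map_mul]
  exact Submodule.mem_map_of_mem (hVH (LinearMap.mem_range_self _ _))

theorem map_gradeF (n : ℕ) :
    Submodule.map πₗ (gradeF k H V n)
      = Submodule.map πₗ (VF k H V) ^ n * Submodule.map πₗ (HF k H V) := by
  rw [gradeF, Submodule.map_mul, Submodule.map_pow, Submodule.map_mul]
  exact le_antisymm
    (mul_mul_pow_le_pow_mul (map_HF_mul_map_VF_le act) (map_HF_mul_map_HF_le act) n)
    (pow_mul_le_mul_mul_pow (one_le_map_HF act) n)

theorem range_degreeMap (n : ℕ) :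
    LinearMap.range (degreeMap act n)
      = Submodule.map πₗ (VF k H V) ^ n * Submodule.map πₗ (HF k H V) := by
  rw [degreeMap, toQuot, LinearMap.comp_assoc, LinearMap.map_comp_rTensor,
    LinearMap.range_mul'_comp_map, map_HF_eq_range, LinearMap.range_comp, LinearMap.range_comp,
    TensorPower.range_toTensorAlgebra, Submodule.map_comp, Submodule.map_pow,
    ← LinearMap.range_comp, liftV, TensorAlgebra.ι_comp_lift, Submodule.map_pow]
  rfl

end Quotient

end PaperTH

theorem stmt_9_general {k H V : Type*} [Field k] [Ring H] [HopfAlgebra k H]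
    [AddCommGroup V] [Module k V]
    (act : H ⊗[k] V →ₗ[k] V)
    (hone : ∀ v : V, act ((1 : H) ⊗ₜ[k] v) = v)
    (hmul : ∀ (h h' : H) (v : V),
      act ((h * h') ⊗ₜ[k] v) = act (h ⊗ₜ[k] act (h' ⊗ₜ[k] v)))
    (n : ℕ) :
    (∃ e : ((⨂[k]^n V) ⊗[k] H) ≃ₗ[k]
        ↥(Submodule.map
            (RingQuot.mkAlgHom k (presRel k H V (smashSet k H V act))).toLinearMap
            (gradeF k H V n)),
      ∀ (x : ⨂[k]^n V) (h h' : H),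
        ((e (x ⊗ₜ[k] (h * h')) :
            RingQuot (presRel k H V (smashSet k H V act))))
          = (e (x ⊗ₜ[k] h) : RingQuot (presRel k H V (smashSet k H V act)))
            * (RingQuot.mkAlgHom k (presRel k H V (smashSet k H V act)) (jH k H V h'))) ∧
    Submodule.map (RingQuot.mkAlgHom k (presRel k H V (smashSet k H V act))).toLinearMap
        (gradeF k H V n)
      ≤ (Submodule.map
            (RingQuot.mkAlgHom k (presRel k H V (smashSet k H V act))).toLinearMap
            (VF k H V)) ^ n
        * Submodule.map
            (RingQuot.mkAlgHom k (presRel k H V (smashSet k H V act))).toLinearMap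
            (HF k H V) := by
  have hrange : LinearMap.range (degreeMap act n)
      = Submodule.map (RingQuot.mkAlgHom k (presRel k H V (smashSet k H V act))).toLinearMap
          (gradeF k H V n) :=
    (range_degreeMap act n).trans (map_gradeF act n).symm
  refine ⟨⟨(LinearEquiv.ofInjective _ (degreeMap_injective act hone hmul n)).trans
      (LinearEquiv.ofEq _ _ hrange), fun x h h' => degreeMap_tmul_mul act n x h h'⟩,
    (map_gradeF act n).le⟩

/-- In `T_H(H⊗V⊗H)/(R')`, where `R'` is the span of the smash relations
`h ⊗ v ⊗ 1 − 1 ⊗ τ(h ⊗ v)`, the degree-`n` component is isomorphic, as a right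
`H`-module, to the free right `H`-module `V^{⊗n} ⊗ H`; more precisely, modulo `(R')`
every element of the degree-`n` component is congruent to an element of
`(k1⊗V⊗k1)^{⊗(n-1)} ⊗_H (k1⊗V⊗H)`, i.e. the degree-`n` piece of the quotient lies in
`(image of V)^n * (image of H)`. -/
theorem stmt_9 {k H V : Type*} [Field k] [Ring H] [HopfAlgebra k H]
    [AddCommGroup V] [Module k V] [Module.Finite k V]
    (act : H ⊗[k] V →ₗ[k] V)
    (hone : ∀ v : V, act ((1 : H) ⊗ₜ[k] v) = v)
    (hmul : ∀ (h h' : H) (v : V),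
      act ((h * h') ⊗ₜ[k] v) = act (h ⊗ₜ[k] act (h' ⊗ₜ[k] v)))
    (n : ℕ) :
    (∃ e : ((⨂[k]^n V) ⊗[k] H) ≃ₗ[k]
        ↥(Submodule.map
            (RingQuot.mkAlgHom k (presRel k H V (smashSet k H V act))).toLinearMap
            (gradeF k H V n)),
      ∀ (x : ⨂[k]^n V) (h h' : H),
        ((e (x ⊗ₜ[k] (h * h')) :
            RingQuot (presRel k H V (smashSet k H V act))))
          = (e (x ⊗ₜ[k] h) : RingQuot (presRel k H V (smashSet k H V act)))
            * (RingQuot.mkAlgHom k (presRel k H V (smashSet k H V act)) (jH k H V h'))) ∧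
    Submodule.map (RingQuot.mkAlgHom k (presRel k H V (smashSet k H V act))).toLinearMap
        (gradeF k H V n)
      ≤ (Submodule.map
            (RingQuot.mkAlgHom k (presRel k H V (smashSet k H V act))).toLinearMap
            (VF k H V)) ^ n
        * Submodule.map
            (RingQuot.mkAlgHom k (presRel k H V (smashSet k H V act))).toLinearMap
            (HF k H V) :=
  stmt_9_general act hone hmul n
end

section
/- Let H be a k-algebra and W a free H-bimodule with free basis spanning a k-space V, and let A = T_H(W)/(R̃) be a linear-quadratic homogeneous algebra (R̃ ⊆ W ⊕ (W ⊗_H W)) whose degree-2 relations lie in V⊗V ⊆ W⊗_H W. If A_t is a graded deformation of A, then for every c ∈ k the fiber A_t|_{t=c} is isomorphic, as a filtered algebra, to a strong PBW deformation of A of the form T_H(W)/(P) where P = (1−α−β)(R̃₂) ∪ (1−λ)(R̃₁) for some k-linear maps λ: W → H, α: V⊗V → W, β: V⊗V → H, with R̃₁ = R̃∩W and R̃₂ = R̃∩(W⊗_H W). -/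
open scoped TensorProduct

open PaperTH

noncomputable section

variable (k H V : Type*) [CommRing k] [Ring H] [Algebra k H]
  [AddCommGroup V] [Module k V]

/-- The homogeneous linear-quadratic relations `R̃ = R̃₁ ∪ R̃₂`, with `R̃₁ ⊆ W` (degree 1)
and `R̃₂ ⊆ V ⊗ V` (degree 2). -/
noncomputable def lqRels (R1 : Submodule k (TF k H V)) (R2 : Submodule k (V ⊗[k] V)) :
    Set (TF k H V) :=
  (R1 : Set (TF k H V)) ∪ (iVV k H V '' (R2 : Set (V ⊗[k] V)))

/-- The deformed relations `P = (1−α−β)(R̃₂) ∪ (1−λ)(R̃₁)`. -/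
noncomputable def lqDefRels (R1 : Submodule k (TF k H V)) (R2 : Submodule k (V ⊗[k] V))
    (lam : TF k H V →ₗ[k] TF k H V) (α β : V ⊗[k] V →ₗ[k] TF k H V) :
    Set (TF k H V) :=
  {x | ∃ r ∈ R1, x = r - lam r} ∪
  {x | ∃ r ∈ R2, x = iVV k H V r - α r - β r}

/-- The linear-quadratic homogeneous algebra `A = T_H(W)/(R̃)`. -/
abbrev LQAlg (R1 : Submodule k (TF k H V)) (R2 : Submodule k (V ⊗[k] V)) :=
  RingQuot (presRel k H V (lqRels k H V R1 R2))

/-- Degree-`n` component of `A`. -/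
noncomputable def gradeLQ (R1 : Submodule k (TF k H V)) (R2 : Submodule k (V ⊗[k] V))
    (n : ℕ) : Submodule k (LQAlg k H V R1 R2) :=
  Submodule.map
    (RingQuot.mkAlgHom k (presRel k H V (lqRels k H V R1 R2))).toLinearMap
    (gradeF k H V n)

/-- The `n`-th filtered piece of `A`. -/
noncomputable def filtLQ (R1 : Submodule k (TF k H V)) (R2 : Submodule k (V ⊗[k] V))
    (n : ℕ) : Submodule k (LQAlg k H V R1 R2) :=
  Submodule.map
    (RingQuot.mkAlgHom k (presRel k H V (lqRels k H V R1 R2))).toLinearMap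
    (filtF k H V n)

/-- The filtered algebra `B = T_H(W)/(P)`. -/
abbrev LQDefAlg (R1 : Submodule k (TF k H V)) (R2 : Submodule k (V ⊗[k] V))
    (lam : TF k H V →ₗ[k] TF k H V) (α β : V ⊗[k] V →ₗ[k] TF k H V) :=
  RingQuot (presRel k H V (lqDefRels k H V R1 R2 lam α β))

/-- The `n`-th filtered piece of `B`. -/
noncomputable def filtLQDef (R1 : Submodule k (TF k H V)) (R2 : Submodule k (V ⊗[k] V))
    (lam : TF k H V →ₗ[k] TF k H V) (α β : V ⊗[k] V →ₗ[k] TF k H V) (n : ℕ) :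
    Submodule k (LQDefAlg k H V R1 R2 lam α β) :=
  Submodule.map
    (RingQuot.mkAlgHom k (presRel k H V (lqDefRels k H V R1 R2 lam α β))).toLinearMap
    (filtF k H V n)

/-- `B = T_H(W)/(P)` is a strong PBW deformation of `A = T_H(W)/(R̃)`: the canonical
graded epimorphism `A → gr B` is injective in every degree (expressed at the level of
the free presentation). -/
def IsStrongPBWofLQ (R1 : Submodule k (TF k H V)) (R2 : Submodule k (V ⊗[k] V))
    (lam : TF k H V →ₗ[k] TF k H V) (α β : V ⊗[k] V →ₗ[k] TF k H V) : Prop :=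
  ∀ n, gradeF k H V n ⊓
      ((twoSidedSpan k (baseSet k H V)
        ⊔ twoSidedSpan k (lqDefRels k H V R1 R2 lam α β)) ⊔ filtFpred k H V n)
    ≤ twoSidedSpan k (baseSet k H V) ⊔ twoSidedSpan k (lqRels k H V R1 R2)

end

/-! The fiber `A_c = A_t|_{t=c}` is the space `A` with the product `∑ cⁱ μᵢ`. Since `μᵢ`
lowers degree by `i`, this product agrees with that of `A` up to lower order, so the algebra map
`φ : T_H(W) → A_c` extending the identity on generators agrees with the projection
`π : T_H(W) → A` up to lower filtration. On a linear relation `r`, `φ r` thus has degree `0` and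
equals `φ (λ r)` for some `λ r ∈ H`; on a quadratic relation, `φ r` has degree `≤ 1` and is
matched by `α r ∈ W` up to degree `0`, the rest by `β r ∈ H` (linearly, as `k` is a field).
Hence `φ` factors through `B = T_H(W)/(P)`.

As `R̃` is homogeneous, `A` is graded (checked with `T_H(W) → T_H(W)[X]`, `v ↦ v X`): a
homogeneous element whose image in `A` has lower filtration is a relation. With `φ ≡ π` this
gives, by induction on the filtration, injectivity of `B → A_c` and the strong PBW property;
surjectivity and compatibility with the filtrations follow from `φ ≡ π` directly. -/

noncomputable section

namespace PaperTH

section TwoSidedSpan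

variable {k A B : Type*} [CommRing k] [Ring A] [Algebra k A] [Ring B] [Algebra k B]
  {s : Set A}

theorem mul_mul_mem_twoSidedSpan {p : A} (hp : p ∈ s) (a b : A) :
    a * p * b ∈ twoSidedSpan k s :=
  Submodule.subset_span ⟨a, p, b, hp, rfl⟩

theorem mem_twoSidedSpan {p : A} (hp : p ∈ s) : p ∈ twoSidedSpan k s := by
  simpa using mul_mul_mem_twoSidedSpan (k := k) hp 1 1

theorem twoSidedSpan_mul_mem_left (a : A) {x : A} (hx : x ∈ twoSidedSpan k s) :
    a * x ∈ twoSidedSpan k s := by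
  induction hx using Submodule.span_induction with
  | mem x hx =>
    obtain ⟨u, p, w, hp, rfl⟩ := hx
    simpa only [mul_assoc] using mul_mul_mem_twoSidedSpan (k := k) hp (a * u) w
  | zero => simp
  | add x y _ _ hx hy => rw [mul_add]; exact add_mem hx hy
  | smul c x _ hx => rw [mul_smul_comm]; exact Submodule.smul_mem _ _ hx

theorem twoSidedSpan_mul_mem_right (b : A) {x : A} (hx : x ∈ twoSidedSpan k s) :
    x * b ∈ twoSidedSpan k s := by
  induction hx using Submodule.span_induction with
  | mem x hx =>
    obtain ⟨u, p, w, hp, rfl⟩ := hx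
    simpa only [mul_assoc] using mul_mul_mem_twoSidedSpan (k := k) hp u (w * b)
  | zero => simp
  | add x y _ _ hx hy => rw [add_mul]; exact add_mem hx hy
  | smul c x _ hx => rw [smul_mul_assoc]; exact Submodule.smul_mem _ _ hx

theorem mul_twoSidedSpan_le (M : Submodule k A) : M * twoSidedSpan k s ≤ twoSidedSpan k s :=
  Submodule.mul_le.mpr fun x _ _ hy => twoSidedSpan_mul_mem_left x hy

theorem twoSidedSpan_mul_le (M : Submodule k A) : twoSidedSpan k s * M ≤ twoSidedSpan k s :=
  Submodule.mul_le.mpr fun _ hx y _ => twoSidedSpan_mul_mem_right y hx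

theorem sup_twoSidedSpan_mul_le (M N : Submodule k A) :
    (M ⊔ twoSidedSpan k s) * (N ⊔ twoSidedSpan k s) ≤ M * N ⊔ twoSidedSpan k s := by
  rw [Submodule.mul_sup, Submodule.sup_mul, Submodule.sup_mul]
  exact sup_le (sup_le le_sup_left (le_sup_of_le_right (twoSidedSpan_mul_le N)))
    (sup_le (le_sup_of_le_right (mul_twoSidedSpan_le M))
      (le_sup_of_le_right (twoSidedSpan_mul_le _)))

theorem twoSidedSpan_le_ker (f : A →ₐ[k] B) (hf : ∀ p ∈ s, f p = 0) :
    twoSidedSpan k s ≤ LinearMap.ker f.toLinearMap := by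
  rw [twoSidedSpan, Submodule.span_le]
  rintro _ ⟨a, p, b, hp, rfl⟩
  simp [hf p hp]

end TwoSidedSpan

theorem sum_range_sum_range_eq_sum_antidiagonal {M : Type*} [AddCommMonoid M] {N : ℕ}
    {f : ℕ → ℕ → M} (hf : ∀ i j, N < i + j → f i j = 0) :
    ∑ i ∈ Finset.range (N + 1), ∑ j ∈ Finset.range (N + 1), f i j
      = ∑ n ∈ Finset.range (N + 1), ∑ i ∈ Finset.range (n + 1), f i (n - i) := by
  rw [Finset.sum_range_diag_flip]
  refine Finset.sum_congr rfl fun i hi => (Finset.sum_subset ?_ fun j hj hj' => hf i j ?_).symm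
  · exact Finset.range_subset_range.mpr (Nat.sub_le _ _)
  · simp only [Finset.mem_range] at hi hj hj'
    omega

theorem exists_linearMap_lift {K M E F : Type*} [DivisionRing K] [AddCommGroup M] [Module K M]
    [AddCommGroup E] [Module K E] [AddCommGroup F] [Module K F] (f : E →ₗ[K] F)
    (S : Submodule K E) {R : Submodule K M} (ψ : M →ₗ[K] F)
    (hψ : ∀ r ∈ R, ψ r ∈ S.map f) :
    ∃ g : M →ₗ[K] E, (∀ m, g m ∈ S) ∧ ∀ r ∈ R, f (g r) = ψ r := by
  let f' : S →ₗ[K] S.map f :=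
    (f ∘ₗ S.subtype).codRestrict _ fun s => Submodule.mem_map_of_mem s.2
  have hf' : LinearMap.range f' = ⊤ := by
    refine LinearMap.range_eq_top.mpr ?_
    rintro ⟨_, s, hs, rfl⟩
    exact ⟨⟨s, hs⟩, rfl⟩
  obtain ⟨σ, hσ⟩ := f'.exists_rightInverse_of_surjective hf'
  obtain ⟨g, hg⟩ := LinearMap.exists_extend
    (σ ∘ₗ (ψ ∘ₗ R.subtype).codRestrict _ fun r => hψ r r.2)
  refine ⟨S.subtype ∘ₗ g, fun m => (g m).2, fun r hr => ?_⟩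
  have hgr : g r = σ ⟨ψ r, hψ r hr⟩ := LinearMap.congr_fun hg ⟨r, hr⟩
  simp only [LinearMap.comp_apply, Submodule.subtype_apply, hgr]
  exact congrArg Subtype.val (LinearMap.congr_fun hσ ⟨ψ r, hψ r hr⟩)

section

variable {k H V : Type*} [CommRing k] [Ring H] [Algebra k H] [AddCommGroup V] [Module k V]

section Presentation

abbrev PresAlg (Q : Set (TF k H V)) := RingQuot (presRel k H V Q)

abbrev presMk (Q : Set (TF k H V)) : TF k H V →ₐ[k] PresAlg Q :=
  RingQuot.mkAlgHom k (presRel k H V Q)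

/-- The kernel of `presMk Q`, see `presMk_eq_presMk_iff`. -/
def presIdeal (Q : Set (TF k H V)) : Submodule k (TF k H V) :=
  twoSidedSpan k (baseSet k H V) ⊔ twoSidedSpan k Q

variable {Q : Set (TF k H V)}

theorem presIdeal_mul_mem_left (a : TF k H V) {x : TF k H V} (hx : x ∈ presIdeal Q) :
    a * x ∈ presIdeal Q := by
  obtain ⟨y, hy, z, hz, rfl⟩ := Submodule.mem_sup.mp hx
  rw [mul_add]
  exact add_mem (Submodule.mem_sup_left (twoSidedSpan_mul_mem_left a hy))
    (Submodule.mem_sup_right (twoSidedSpan_mul_mem_left a hz))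

theorem presIdeal_mul_mem_right (b : TF k H V) {x : TF k H V} (hx : x ∈ presIdeal Q) :
    x * b ∈ presIdeal Q := by
  obtain ⟨y, hy, z, hz, rfl⟩ := Submodule.mem_sup.mp hx
  rw [add_mul]
  exact add_mem (Submodule.mem_sup_left (twoSidedSpan_mul_mem_right b hy))
    (Submodule.mem_sup_right (twoSidedSpan_mul_mem_right b hz))

theorem presIdeal_le_ker {B : Type*} [Ring B] [Algebra k B] (f : TF k H V →ₐ[k] B)
    (hf : ∀ ⦃x y⦄, presRel k H V Q x y → f x = f y) :
    presIdeal Q ≤ LinearMap.ker f.toLinearMap := by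
  refine sup_le (twoSidedSpan_le_ker f ?_) (twoSidedSpan_le_ker f fun p hp => ?_)
  · rintro _ (⟨h, h', rfl⟩ | rfl)
    · rw [map_sub, hf (presRel.mulH h h'), sub_self]
    · rw [map_sub, hf presRel.oneH, map_one, sub_self]
  · rw [hf (presRel.mem hp), map_zero]

theorem presMk_eq_zero_of_mem {x : TF k H V} (hx : x ∈ presIdeal Q) : presMk Q x = 0 :=
  presIdeal_le_ker (presMk Q) (fun _ _ h => RingQuot.mkAlgHom_rel k h) hx

theorem presMk_eq_presMk_iff {x y : TF k H V} :
    presMk Q x = presMk Q y ↔ x - y ∈ presIdeal Q := by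
  refine ⟨fun hxy => ?_, fun h => ?_⟩
  swap
  · rw [← sub_eq_zero, ← map_sub]
    exact presMk_eq_zero_of_mem h
  let I : TwoSidedIdeal (TF k H V) := .mk' (presIdeal Q) (zero_mem _) add_mem neg_mem
    (presIdeal_mul_mem_left _) (presIdeal_mul_mem_right _)
  have hrel : ∀ ⦃a b⦄, presRel k H V Q a b → I.ringCon.mk' a = I.ringCon.mk' b := by
    intro a b hab
    refine (RingCon.eq _).mpr (show a - b ∈ presIdeal Q from ?_)
    cases hab with
    | mulH h h' => exact Submodule.mem_sup_left (mem_twoSidedSpan (Or.inl ⟨h, h', rfl⟩))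
    | oneH => exact Submodule.mem_sup_left (mem_twoSidedSpan (Or.inr rfl))
    | mem hx => rw [sub_zero]; exact Submodule.mem_sup_right (mem_twoSidedSpan hx)
  have hmk : ∀ z, presMk Q z = RingQuot.mkRingHom (presRel k H V Q) z := fun z => by
    rw [← RingQuot.mkAlgHom_coe k]; rfl
  have := congrArg (RingQuot.lift ⟨I.ringCon.mk', hrel⟩) hxy
  rw [hmk, hmk, RingQuot.lift_mkRingHom_apply, RingQuot.lift_mkRingHom_apply] at this
  exact (RingCon.eq _).mp this

theorem presMk_eq_zero_iff {x : TF k H V} : presMk Q x = 0 ↔ x ∈ presIdeal Q := by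
  rw [← map_zero (presMk Q), presMk_eq_presMk_iff, sub_zero]

theorem presMk_eq_presMk_of_sub_mem {x y : TF k H V} (h : x - y ∈ Q) :
    presMk Q x = presMk Q y :=
  presMk_eq_presMk_iff.mpr (Submodule.mem_sup_right (mem_twoSidedSpan h))

end Presentation

section Grading

theorem jH_mem_HF (h : H) : jH k H V h ∈ HF k H V :=
  Submodule.mem_sup_left (LinearMap.mem_range_self _ h)

theorem algebraMap_mem_HF (s : k) : algebraMap k (TF k H V) s ∈ HF k H V :=
  Submodule.mem_sup_right (Submodule.algebraMap_mem s)

theorem one_mem_HF : (1 : TF k H V) ∈ HF k H V := by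
  simpa using algebraMap_mem_HF (k := k) (H := H) (V := V) 1

theorem mem_HF_iff {x : TF k H V} :
    x ∈ HF k H V ↔ ∃ h s, x = jH k H V h + algebraMap k (TF k H V) s := by
  refine ⟨fun hx => ?_, ?_⟩
  · obtain ⟨_, ⟨h, rfl⟩, _, hb, rfl⟩ := Submodule.mem_sup.mp hx
    rw [Submodule.one_eq_range] at hb
    obtain ⟨s, rfl⟩ := hb
    exact ⟨h, s, rfl⟩
  · rintro ⟨h, s, rfl⟩
    exact add_mem (jH_mem_HF h) (algebraMap_mem_HF s)

theorem ι_eq_jH_add_jV (h : H) (v : V) :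
    TensorAlgebra.ι k (h, v) = jH k H V h + jV k H V v := by
  rw [← Prod.fst_add_snd (h, v), map_add]; rfl

theorem gradeF_zero : gradeF k H V 0 = HF k H V := by
  rw [gradeF, pow_zero, mul_one]

theorem gradeF_succ (n : ℕ) :
    gradeF k H V (n + 1) = gradeF k H V n * (VF k H V * HF k H V) := by
  rw [gradeF, gradeF, pow_succ, mul_assoc]

theorem mem_VF_mul_HF (v : V) : jV k H V v ∈ VF k H V * HF k H V := by
  have := Submodule.mul_mem_mul (LinearMap.mem_range_self _ v : jV k H V v ∈ VF k H V)
    (one_mem_HF : 1 ∈ HF k H V)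
  rwa [mul_one] at this

theorem VF_mul_HF_le_gradeF_one : VF k H V * HF k H V ≤ gradeF k H V 1 := by
  rw [gradeF, pow_one]
  calc VF k H V * HF k H V = 1 * (VF k H V * HF k H V) := (one_mul _).symm
    _ ≤ HF k H V * (VF k H V * HF k H V) := mul_le_mul_left le_sup_right _

theorem jV_mem_gradeF_one (v : V) : jV k H V v ∈ gradeF k H V 1 :=
  VF_mul_HF_le_gradeF_one (mem_VF_mul_HF v)

theorem iVV_mem_gradeF_two (r : V ⊗[k] V) : iVV k H V r ∈ gradeF k H V 2 := by
  induction r using TensorProduct.induction_on with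
  | zero => simp
  | tmul v w =>
    rw [gradeF_succ]
    simpa [iVV] using Submodule.mul_mem_mul (jV_mem_gradeF_one v) (mem_VF_mul_HF w)
  | add x y hx hy => rw [map_add]; exact add_mem hx hy

theorem gradeF_le_filtF {i n : ℕ} (h : i ≤ n) : gradeF k H V i ≤ filtF k H V n :=
  le_iSup₂_of_le i h le_rfl

theorem gradeF_le_filtFpred {i n : ℕ} (h : i < n) : gradeF k H V i ≤ filtFpred k H V n :=
  le_iSup₂_of_le i h le_rfl

theorem filtF_mono {m n : ℕ} (h : m ≤ n) : filtF k H V m ≤ filtF k H V n :=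
  iSup₂_le fun _ hi => gradeF_le_filtF (hi.trans h)

theorem filtFpred_zero : filtFpred k H V 0 = ⊥ :=
  le_bot_iff.mp (iSup₂_le fun i hi => absurd hi (Nat.not_lt_zero i))

theorem filtFpred_succ (n : ℕ) : filtFpred k H V (n + 1) = filtF k H V n :=
  le_antisymm (iSup₂_le fun _ hi => gradeF_le_filtF (Nat.lt_succ_iff.mp hi))
    (iSup₂_le fun _ hi => gradeF_le_filtFpred (Nat.lt_succ_iff.mpr hi))

theorem filtF_le_filtFpred {m n : ℕ} (h : m < n) : filtF k H V m ≤ filtFpred k H V n := by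
  obtain ⟨n, rfl⟩ := Nat.exists_eq_add_one_of_ne_zero (Nat.ne_zero_of_lt h)
  rw [filtFpred_succ]
  exact filtF_mono (Nat.lt_succ_iff.mp h)

theorem filtFpred_le_filtF (n : ℕ) : filtFpred k H V n ≤ filtF k H V n :=
  iSup₂_le fun _ hi => gradeF_le_filtF hi.le

theorem filtF_eq_filtFpred_sup_gradeF (n : ℕ) :
    filtF k H V n = filtFpred k H V n ⊔ gradeF k H V n := by
  refine le_antisymm (iSup₂_le fun i hi => ?_)
    (sup_le (filtFpred_le_filtF n) (gradeF_le_filtF le_rfl))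
  rcases hi.lt_or_eq with h | rfl
  · exact le_sup_of_le_left (gradeF_le_filtFpred h)
  · exact le_sup_right

theorem filtF_zero : filtF k H V 0 = HF k H V := by
  rw [filtF_eq_filtFpred_sup_gradeF, filtFpred_zero, bot_sup_eq, gradeF_zero]

theorem HF_mul_HF_le : HF k H V * HF k H V ≤ HF k H V ⊔ twoSidedSpan k (baseSet k H V) := by
  refine Submodule.mul_le.mpr fun x hx y hy => ?_
  obtain ⟨h, s, rfl⟩ := mem_HF_iff.mp hx
  obtain ⟨h', s', rfl⟩ := mem_HF_iff.mp hy
  have hsplit : jH k H V h * jH k H V h' = jH k H V (h * h')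
      + (jH k H V h * jH k H V h' - jH k H V (h * h')) := by abel
  rw [add_mul, mul_add, mul_add, hsplit, ← Algebra.commutes, ← Algebra.smul_def,
    ← Algebra.smul_def, ← RingHom.map_mul]
  refine add_mem (add_mem (add_mem (Submodule.mem_sup_left (jH_mem_HF _))
    (Submodule.mem_sup_right (mem_twoSidedSpan (Or.inl ⟨h, h', rfl⟩))))
    (Submodule.mem_sup_left (Submodule.smul_mem _ _ (jH_mem_HF _))))
    (add_mem (Submodule.mem_sup_left (Submodule.smul_mem _ _ (jH_mem_HF _)))
      (Submodule.mem_sup_left (algebraMap_mem_HF _)))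

theorem gradeF_mul_HF_le (p : ℕ) :
    gradeF k H V p * HF k H V ≤ gradeF k H V p ⊔ twoSidedSpan k (baseSet k H V) := by
  cases p with
  | zero => rw [gradeF_zero]; exact HF_mul_HF_le
  | succ p =>
    calc gradeF k H V (p + 1) * HF k H V
        = gradeF k H V p * (VF k H V * (HF k H V * HF k H V)) := by
          rw [gradeF_succ, mul_assoc, mul_assoc]
      _ ≤ gradeF k H V p * (VF k H V * (HF k H V ⊔ twoSidedSpan k (baseSet k H V))) :=
          mul_le_mul_right (mul_le_mul_right HF_mul_HF_le _) _
      _ ≤ gradeF k H V (p + 1) ⊔ twoSidedSpan k (baseSet k H V) := by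
          rw [Submodule.mul_sup, Submodule.mul_sup, ← gradeF_succ]
          exact sup_le_sup_left
            ((mul_le_mul_right (mul_twoSidedSpan_le _) _).trans (mul_twoSidedSpan_le _)) _

theorem gradeF_mul_gradeF_le (p q : ℕ) :
    gradeF k H V p * gradeF k H V q
      ≤ gradeF k H V (p + q) ⊔ twoSidedSpan k (baseSet k H V) := by
  induction q with
  | zero => rw [gradeF_zero]; exact gradeF_mul_HF_le p
  | succ q ih =>
    rw [gradeF_succ, ← mul_assoc, ← add_assoc, gradeF_succ]
    refine (mul_le_mul_left ih _).trans ?_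
    rw [Submodule.sup_mul]
    exact sup_le_sup_left (twoSidedSpan_mul_le _) _

theorem filtF_mul_filtF_le (p q : ℕ) :
    filtF k H V p * filtF k H V q ≤ filtF k H V (p + q) ⊔ twoSidedSpan k (baseSet k H V) := by
  rw [filtF, filtF, Submodule.iSup_mul]
  refine iSup_le fun i => ?_
  rw [Submodule.iSup_mul]
  refine iSup_le fun hi => ?_
  rw [Submodule.mul_iSup]
  refine iSup_le fun j => ?_
  rw [Submodule.mul_iSup]
  refine iSup_le fun hj => ?_
  exact (gradeF_mul_gradeF_le i j).trans
    (sup_le_sup_right (gradeF_le_filtF (Nat.add_le_add hi hj)) _)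

end Grading

section Homogenization

open Polynomial

/-- The power of `X` records the number of `V`-letters. -/
def homogenize : TF k H V →ₐ[k] (TF k H V)[X] :=
  TensorAlgebra.lift k <|
    (CAlgHom (R := k)).toLinearMap ∘ₗ jH k H V ∘ₗ LinearMap.fst k H V
      + LinearMap.mulRight k (X : (TF k H V)[X]) ∘ₗ (CAlgHom (R := k)).toLinearMap
        ∘ₗ jV k H V ∘ₗ LinearMap.snd k H V

theorem homogenize_jH (h : H) : homogenize (jH k H V h) = C (jH k H V h) := by
  simp [homogenize, jH]

theorem homogenize_jV (v : V) : homogenize (jV k H V v) = C (jV k H V v) * X := by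
  simp [homogenize, jV]

theorem homogenize_algebraMap (s : k) :
    homogenize (algebraMap k (TF k H V) s) = C (algebraMap k (TF k H V) s) := by
  rw [AlgHom.commutes, Polynomial.algebraMap_apply]

def homogOfDeg (n : ℕ) : Submodule k (TF k H V) :=
  LinearMap.ker (homogenize.toLinearMap
    - LinearMap.mulRight k ((X : (TF k H V)[X]) ^ n) ∘ₗ (CAlgHom (R := k)).toLinearMap)

theorem mem_homogOfDeg_iff {n : ℕ} {x : TF k H V} :
    x ∈ homogOfDeg n ↔ homogenize x = C x * X ^ n := by
  simp [homogOfDeg, sub_eq_zero]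

theorem homogOfDeg_mul_le (m n : ℕ) :
    homogOfDeg m * homogOfDeg n ≤ (homogOfDeg (m + n) : Submodule k (TF k H V)) := by
  refine Submodule.mul_le.mpr fun x hx y hy => ?_
  rw [mem_homogOfDeg_iff] at hx hy ⊢
  rw [map_mul, hx, hy, mul_assoc, ← mul_assoc (X ^ m), X_pow_mul, mul_assoc, ← pow_add,
    ← mul_assoc, ← C_mul]

theorem HF_le_homogOfDeg_zero : HF k H V ≤ homogOfDeg 0 := fun x hx => by
  obtain ⟨h, s, rfl⟩ := mem_HF_iff.mp hx
  rw [mem_homogOfDeg_iff, pow_zero, mul_one, map_add, homogenize_jH, homogenize_algebraMap,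
    C_add]

theorem gradeF_le_homogOfDeg (n : ℕ) : gradeF k H V n ≤ homogOfDeg n := by
  induction n with
  | zero => rw [gradeF_zero]; exact HF_le_homogOfDeg_zero
  | succ n ih =>
    have hV : VF k H V ≤ homogOfDeg 1 := by
      rintro _ ⟨v, rfl⟩
      rw [mem_homogOfDeg_iff, pow_one, homogenize_jV]
    rw [gradeF_succ, ← mul_assoc]
    calc gradeF k H V n * VF k H V * HF k H V
        ≤ homogOfDeg n * homogOfDeg 1 * homogOfDeg 0 :=
          mul_le_mul' (mul_le_mul' ih hV) HF_le_homogOfDeg_zero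
      _ ≤ homogOfDeg (n + 1 + 0) :=
          (mul_le_mul_left (homogOfDeg_mul_le n 1) _).trans (homogOfDeg_mul_le _ 0)

theorem coeff_homogenize_of_mem_gradeF {n : ℕ} {x : TF k H V} (hx : x ∈ gradeF k H V n)
    (i : ℕ) : (homogenize x).coeff i = if i = n then x else 0 := by
  rw [mem_homogOfDeg_iff.mp (gradeF_le_homogOfDeg n hx), coeff_C_mul_X_pow]

theorem coeff_homogenize_of_mem_filtFpred {n : ℕ} {x : TF k H V}
    (hx : x ∈ filtFpred k H V n) : (homogenize x).coeff n = 0 := by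
  have : filtFpred k H V n ≤ LinearMap.ker ((lcoeff (TF k H V) n).restrictScalars k
      ∘ₗ homogenize.toLinearMap) :=
    iSup₂_le fun i hi y hy => by
      simp [coeff_homogenize_of_mem_gradeF hy, hi.ne']
  simpa using this hx

theorem coeff_homogenize_mem (a : TF k H V) (i : ℕ) :
    (homogenize a).coeff i ∈ filtF k H V i ⊔ twoSidedSpan k (baseSet k H V) := by
  induction a using TensorAlgebra.induction generalizing i with
  | algebraMap r =>
    rw [homogenize_algebraMap, coeff_C]
    split_ifs with h
    · subst h
      rw [filtF_zero]
      exact Submodule.mem_sup_left (algebraMap_mem_HF r)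
    · exact zero_mem _
  | ι x =>
    obtain ⟨h, v⟩ := x
    rw [ι_eq_jH_add_jV, map_add, coeff_add, homogenize_jH, homogenize_jV, coeff_C, coeff_C_mul_X]
    refine add_mem ?_ ?_ <;> split_ifs with hi <;> try exact zero_mem _
    · subst hi
      rw [filtF_zero]
      exact Submodule.mem_sup_left (jH_mem_HF h)
    · subst hi
      exact Submodule.mem_sup_left (gradeF_le_filtF le_rfl (jV_mem_gradeF_one v))
  | mul a b ha hb =>
    rw [map_mul, coeff_mul]
    refine sum_mem fun ij hij => ?_
    rw [← Finset.HasAntidiagonal.mem_antidiagonal.mp hij]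
    refine (sup_twoSidedSpan_mul_le _ _).trans (sup_le (filtF_mul_filtF_le _ _) le_sup_right)
      (Submodule.mul_mem_mul (ha ij.1) (hb ij.2))
  | add a b ha hb =>
    rw [map_add, coeff_add]
    exact add_mem (ha i) (hb i)

def HomogSet (s : Set (TF k H V)) : Prop :=
  ∀ p ∈ s, ∃ d, p ∈ homogOfDeg d

theorem homogSet_baseSet : HomogSet (baseSet k H V) := by
  rintro _ (⟨h, h', rfl⟩ | rfl) <;> refine ⟨0, sub_mem ?_ ?_⟩
  · exact homogOfDeg_mul_le 0 0 (Submodule.mul_mem_mul (HF_le_homogOfDeg_zero (jH_mem_HF h))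
      (HF_le_homogOfDeg_zero (jH_mem_HF h')))
  all_goals exact HF_le_homogOfDeg_zero (by first | exact jH_mem_HF _ | exact one_mem_HF)

theorem coeff_homogenize_mem_twoSidedSpan {s : Set (TF k H V)} (hs : HomogSet s)
    {z : TF k H V} (hz : z ∈ twoSidedSpan k s) (n : ℕ) :
    (homogenize z).coeff n ∈ twoSidedSpan k s := by
  induction hz using Submodule.span_induction with
  | mem x hx =>
    obtain ⟨a, p, b, hp, rfl⟩ := hx
    obtain ⟨d, hd⟩ := hs p hp
    rw [map_mul, map_mul, mem_homogOfDeg_iff.mp hd, ← mul_assoc, coeff_mul]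
    refine sum_mem fun ij _ => ?_
    rw [coeff_mul_X_pow', coeff_mul_C]
    split_ifs
    · exact mul_mul_mem_twoSidedSpan hp _ _
    · rw [zero_mul]; exact zero_mem _
  | zero => simp
  | add x y _ _ hx hy => rw [map_add, coeff_add]; exact add_mem hx hy
  | smul c x _ hx => rw [map_smul, coeff_smul]; exact Submodule.smul_mem _ _ hx

theorem coeff_homogenize_mem_presIdeal {Q : Set (TF k H V)} (hQ : HomogSet Q)
    {z : TF k H V} (hz : z ∈ presIdeal Q) (n : ℕ) : (homogenize z).coeff n ∈ presIdeal Q := by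
  obtain ⟨x, hx, y, hy, rfl⟩ := Submodule.mem_sup.mp hz
  rw [map_add, coeff_add]
  exact add_mem (Submodule.mem_sup_left (coeff_homogenize_mem_twoSidedSpan homogSet_baseSet hx n))
    (Submodule.mem_sup_right (coeff_homogenize_mem_twoSidedSpan hQ hy n))

end Homogenization

section QuotientFiltration

variable (Q : Set (TF k H V))

def filtQ (n : ℕ) : Submodule k (PresAlg Q) :=
  Submodule.map (presMk Q).toLinearMap (filtF k H V n)

def gradeQ (n : ℕ) : Submodule k (PresAlg Q) :=
  Submodule.map (presMk Q).toLinearMap (gradeF k H V n)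

def filtPredQ (n : ℕ) : Submodule k (PresAlg Q) :=
  Submodule.map (presMk Q).toLinearMap (filtFpred k H V n)

variable {Q}

theorem filtQ_mono {m n : ℕ} (h : m ≤ n) : filtQ Q m ≤ filtQ Q n :=
  Submodule.map_mono (filtF_mono h)

theorem gradeQ_le_filtQ {i n : ℕ} (h : i ≤ n) : gradeQ Q i ≤ filtQ Q n :=
  Submodule.map_mono (gradeF_le_filtF h)

theorem filtPredQ_zero : filtPredQ Q 0 = ⊥ := by
  rw [filtPredQ, filtFpred_zero, Submodule.map_bot]

theorem filtPredQ_succ (n : ℕ) : filtPredQ Q (n + 1) = filtQ Q n := by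
  rw [filtPredQ, filtQ, filtFpred_succ]

theorem filtQ_le_filtPredQ {m n : ℕ} (h : m < n) : filtQ Q m ≤ filtPredQ Q n :=
  Submodule.map_mono (filtF_le_filtFpred h)

theorem gradeQ_le_filtPredQ {i n : ℕ} (h : i < n) : gradeQ Q i ≤ filtPredQ Q n :=
  (gradeQ_le_filtQ le_rfl).trans (filtQ_le_filtPredQ h)

theorem filtQ_eq_iSup (n : ℕ) : filtQ Q n = ⨆ (j) (_ : j ≤ n), gradeQ Q j := by
  simp only [filtQ, filtF, Submodule.map_iSup, gradeQ]

theorem filtPredQ_le_filtQ (n : ℕ) : filtPredQ Q n ≤ filtQ Q n :=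
  Submodule.map_mono (filtFpred_le_filtF n)

theorem filtPredQ_mono {m n : ℕ} (h : m ≤ n) : filtPredQ Q m ≤ filtPredQ Q n := by
  cases m with
  | zero => rw [filtPredQ_zero]; exact bot_le
  | succ m => rw [filtPredQ_succ]; exact filtQ_le_filtPredQ h

theorem filtQ_eq_filtPredQ_sup_gradeQ (n : ℕ) : filtQ Q n = filtPredQ Q n ⊔ gradeQ Q n := by
  rw [filtQ, filtPredQ, gradeQ, filtF_eq_filtFpred_sup_gradeF, Submodule.map_sup]

theorem filtQ_zero : filtQ Q 0 = (HF k H V).map (presMk Q).toLinearMap := by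
  rw [filtQ, filtF_zero]

theorem presMk_mem_filtQ {n : ℕ} {x : TF k H V} (hx : x ∈ filtF k H V n) :
    presMk Q x ∈ filtQ Q n :=
  Submodule.mem_map_of_mem hx

theorem presMk_mem_filtQ_zero {x : TF k H V} (hx : x ∈ HF k H V) : presMk Q x ∈ filtQ Q 0 :=
  presMk_mem_filtQ (by rwa [filtF_zero])

theorem one_mem_filtQ_zero : (1 : PresAlg Q) ∈ filtQ Q 0 := by
  simpa using presMk_mem_filtQ_zero (Q := Q) one_mem_HF

theorem map_presMk_twoSidedSpan_baseSet :
    Submodule.map (presMk Q).toLinearMap (twoSidedSpan k (baseSet k H V)) = ⊥ :=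
  le_bot_iff.mp <| Submodule.map_le_iff_le_comap.mpr fun _ hx =>
    presMk_eq_zero_of_mem (Submodule.mem_sup_left hx)

theorem filtQ_mul_filtQ_le (p q : ℕ) : filtQ Q p * filtQ Q q ≤ filtQ Q (p + q) := by
  rw [filtQ, filtQ, filtQ, ← Submodule.map_mul]
  refine (Submodule.map_mono (filtF_mul_filtF_le p q)).trans ?_
  rw [Submodule.map_sup, map_presMk_twoSidedSpan_baseSet, sup_bot_eq]

theorem filtPredQ_mul_filtQ_le (p q : ℕ) : filtPredQ Q p * filtQ Q q ≤ filtPredQ Q (p + q) := by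
  cases p with
  | zero => rw [filtPredQ_zero, Submodule.bot_mul]; exact bot_le
  | succ p =>
    rw [filtPredQ_succ, Nat.succ_add, filtPredQ_succ]
    exact filtQ_mul_filtQ_le p q

theorem filtQ_mul_filtPredQ_le (p q : ℕ) : filtQ Q p * filtPredQ Q q ≤ filtPredQ Q (p + q) := by
  cases q with
  | zero => rw [filtPredQ_zero, Submodule.mul_bot]; exact bot_le
  | succ q =>
    rw [filtPredQ_succ, ← add_assoc, filtPredQ_succ]
    exact filtQ_mul_filtQ_le p q

theorem exists_mem_filtQ (z : PresAlg Q) : ∃ n, z ∈ filtQ Q n := by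
  obtain ⟨x, rfl⟩ := RingQuot.mkAlgHom_surjective k _ z
  induction x using TensorAlgebra.induction with
  | algebraMap r => exact ⟨0, presMk_mem_filtQ_zero (algebraMap_mem_HF r)⟩
  | ι x =>
    refine ⟨1, presMk_mem_filtQ ?_⟩
    rw [ι_eq_jH_add_jV]
    refine add_mem (filtF_mono zero_le_one ?_) (gradeF_le_filtF le_rfl (jV_mem_gradeF_one x.2))
    rw [filtF_zero]
    exact jH_mem_HF x.1
  | mul a b ha hb =>
    obtain ⟨⟨m, hm⟩, ⟨n, hn⟩⟩ := And.intro ha hb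
    exact ⟨m + n, by rw [map_mul]; exact filtQ_mul_filtQ_le m n (Submodule.mul_mem_mul hm hn)⟩
  | add a b ha hb =>
    obtain ⟨⟨m, hm⟩, ⟨n, hn⟩⟩ := And.intro ha hb
    exact ⟨max m n, by
      rw [map_add]
      exact add_mem (filtQ_mono (le_max_left m n) hm) (filtQ_mono (le_max_right m n) hn)⟩

theorem presMk_coeff_homogenize_mem_filtQ (a : TF k H V) (m : ℕ) :
    presMk Q ((homogenize a).coeff m) ∈ filtQ Q m := by
  obtain ⟨u, hu, w, hw, e⟩ := Submodule.mem_sup.mp (coeff_homogenize_mem a m)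
  rw [← e, map_add, presMk_eq_zero_of_mem (Submodule.mem_sup_left hw), add_zero]
  exact presMk_mem_filtQ hu

/-- Gradedness of `T_H(W)/(Q)` for homogeneous `Q`. -/
theorem mem_presIdeal_of_presMk_mem_filtPredQ (hQ : HomogSet Q) {n : ℕ} {x : TF k H V}
    (hx : x ∈ gradeF k H V n) (h : presMk Q x ∈ filtPredQ Q n) : x ∈ presIdeal Q := by
  obtain ⟨u, hu, hux⟩ := h
  have := coeff_homogenize_mem_presIdeal hQ (presMk_eq_presMk_iff.mp hux.symm) n
  rwa [map_sub, Polynomial.coeff_sub, coeff_homogenize_of_mem_filtFpred hu, sub_zero,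
    coeff_homogenize_of_mem_gradeF hx, if_pos rfl] at this

end QuotientFiltration

section Deformation

variable (Q : Set (TF k H V))

/-- A graded deformation `A_t = (A[t], ∑ μ i t^i)` of `A = T_H(W)/(Q)`, by its multiplication
maps `μ i`, of degree `-i`. -/
structure GradedDeformation where
  μ : ℕ → PresAlg Q →ₗ[k] PresAlg Q →ₗ[k] PresAlg Q
  μ_zero : ∀ a b, μ 0 a b = a * b
  μ_unital : ∀ i, 1 ≤ i → ∀ a, μ i 1 a = 0 ∧ μ i a 1 = 0
  μ_deg : ∀ (i m n : ℕ) (a b), a ∈ gradeQ Q m → b ∈ gradeQ Q n →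
    (i ≤ m + n → μ i a b ∈ gradeQ Q (m + n - i)) ∧ (m + n < i → μ i a b = 0)
  μ_assoc : ∀ (n : ℕ) (a b c), ∑ i ∈ Finset.range (n + 1), μ i (μ (n - i) a b) c
    = ∑ i ∈ Finset.range (n + 1), μ i a (μ (n - i) b c)

variable {Q}

namespace GradedDeformation

variable (D : GradedDeformation Q) (c : k)

/-- Both degree bounds on `μ i` at once: by truncated subtraction the level is `0`, where
`filtPredQ` vanishes, exactly when `p + q < i`. -/
theorem μ_mem_filtPredQ {p q : ℕ} {a b : PresAlg Q} (ha : a ∈ filtQ Q p) (hb : b ∈ filtQ Q q)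
    (i : ℕ) : D.μ i a b ∈ filtPredQ Q (p + q + 1 - i) := by
  suffices Submodule.map₂ (D.μ i) (filtQ Q p) (filtQ Q q) ≤ filtPredQ Q (p + q + 1 - i) from
    this (Submodule.apply_mem_map₂ _ ha hb)
  simp only [filtQ_eq_iSup, Submodule.map₂_iSup_left, Submodule.map₂_iSup_right, iSup_le_iff,
    Submodule.map₂_le]
  intro j hj l hl x hx y hy
  obtain ⟨hmem, hzero⟩ := D.μ_deg i _ _ x y hx hy
  rcases le_or_gt i (l + j) with h | h
  · exact gradeQ_le_filtPredQ (by omega) (hmem h)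
  · rw [hzero h]
    exact zero_mem _

theorem μ_mem_filtQ_sub {p q : ℕ} {a b : PresAlg Q} (ha : a ∈ filtQ Q p)
    (hb : b ∈ filtQ Q q) (i : ℕ) : D.μ i a b ∈ filtQ Q (p + q - i) := by
  rw [← filtPredQ_succ]
  exact filtPredQ_mono (by omega) (D.μ_mem_filtPredQ ha hb i)

theorem μ_eq_zero_of_lt {p q : ℕ} {a b : PresAlg Q} (ha : a ∈ filtQ Q p)
    (hb : b ∈ filtQ Q q) {i : ℕ} (hi : p + q < i) : D.μ i a b = 0 := by
  have := D.μ_mem_filtPredQ ha hb i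
  rwa [show p + q + 1 - i = 0 by omega, filtPredQ_zero, Submodule.mem_bot] at this

def fiberMul (a b : PresAlg Q) : PresAlg Q :=
  ∑ᶠ i, c ^ i • D.μ i a b

theorem fiberMul_eq_sum {p q N : ℕ} {a b : PresAlg Q} (ha : a ∈ filtQ Q p)
    (hb : b ∈ filtQ Q q) (hN : p + q ≤ N) :
    D.fiberMul c a b = ∑ i ∈ Finset.range (N + 1), c ^ i • D.μ i a b := by
  refine finsum_eq_finsetSum_of_support_subset _ fun i hi => ?_
  rw [Finset.coe_range, Set.mem_Iio]
  by_contra h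
  exact hi (by simp only [D.μ_eq_zero_of_lt ha hb (show p + q < i by omega), smul_zero])

theorem hasFiniteSupport_μ (a b : PresAlg Q) :
    Function.HasFiniteSupport fun i => c ^ i • D.μ i a b := by
  obtain ⟨p, ha⟩ := exists_mem_filtQ a
  obtain ⟨q, hb⟩ := exists_mem_filtQ b
  refine (Finset.range (p + q + 1)).finite_toSet.subset fun i hi => ?_
  rw [Finset.coe_range, Set.mem_Iio]
  by_contra h
  exact hi (by simp only [D.μ_eq_zero_of_lt ha hb (show p + q < i by omega), smul_zero])

theorem fiberMul_mem_filtQ {p q : ℕ} {a b : PresAlg Q} (ha : a ∈ filtQ Q p)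
    (hb : b ∈ filtQ Q q) : D.fiberMul c a b ∈ filtQ Q (p + q) := by
  rw [D.fiberMul_eq_sum c ha hb le_rfl]
  exact sum_mem fun i _ => Submodule.smul_mem _ _ (filtQ_mono (Nat.sub_le _ _)
    (D.μ_mem_filtQ_sub ha hb i))

theorem fiberMul_sub_mul_mem_filtPredQ {p q : ℕ} {a b : PresAlg Q} (ha : a ∈ filtQ Q p)
    (hb : b ∈ filtQ Q q) : D.fiberMul c a b - a * b ∈ filtPredQ Q (p + q) := by
  rw [D.fiberMul_eq_sum c ha hb le_rfl, Finset.sum_range_succ', pow_zero, one_smul, D.μ_zero,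
    add_sub_cancel_right]
  exact sum_mem fun i _ => Submodule.smul_mem _ _
    (filtPredQ_mono (by omega) (D.μ_mem_filtPredQ ha hb (i + 1)))

theorem fiberMul_eq_mul_of_mem_filtQ_zero {a b : PresAlg Q} (ha : a ∈ filtQ Q 0)
    (hb : b ∈ filtQ Q 0) : D.fiberMul c a b = a * b := by
  rw [D.fiberMul_eq_sum c ha hb le_rfl, Finset.sum_range_one, pow_zero, one_smul, D.μ_zero]

theorem fiberMul_add_left (a a' b : PresAlg Q) :
    D.fiberMul c (a + a') b = D.fiberMul c a b + D.fiberMul c a' b := by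
  simp only [fiberMul, map_add, LinearMap.add_apply, smul_add]
  exact finsum_add_distrib (D.hasFiniteSupport_μ c a b) (D.hasFiniteSupport_μ c a' b)

theorem fiberMul_add_right (a b b' : PresAlg Q) :
    D.fiberMul c a (b + b') = D.fiberMul c a b + D.fiberMul c a b' := by
  simp only [fiberMul, map_add, smul_add]
  exact finsum_add_distrib (D.hasFiniteSupport_μ c a b) (D.hasFiniteSupport_μ c a b')

theorem fiberMul_smul_left (s : k) (a b : PresAlg Q) :
    D.fiberMul c (s • a) b = s • D.fiberMul c a b := by
  simp only [fiberMul, map_smul, LinearMap.smul_apply, smul_comm _ s]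
  exact (smul_finsum' s (D.hasFiniteSupport_μ c a b)).symm

theorem fiberMul_smul_right (s : k) (a b : PresAlg Q) :
    D.fiberMul c a (s • b) = s • D.fiberMul c a b := by
  simp only [fiberMul, map_smul, smul_comm _ s]
  exact (smul_finsum' s (D.hasFiniteSupport_μ c a b)).symm

theorem fiberMul_zero_left (b : PresAlg Q) : D.fiberMul c 0 b = 0 := by
  simp [fiberMul]

theorem fiberMul_zero_right (a : PresAlg Q) : D.fiberMul c a 0 = 0 := by
  simp [fiberMul]

theorem fiberMul_one_left (a : PresAlg Q) : D.fiberMul c 1 a = a := by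
  obtain ⟨q, hq⟩ := exists_mem_filtQ a
  rw [D.fiberMul_eq_sum c one_mem_filtQ_zero hq le_rfl, Finset.sum_range_succ', pow_zero,
    one_smul, D.μ_zero, one_mul, add_eq_right]
  exact Finset.sum_eq_zero fun i _ => by rw [(D.μ_unital (i + 1) (by omega) a).1, smul_zero]

theorem fiberMul_one_right (a : PresAlg Q) : D.fiberMul c a 1 = a := by
  obtain ⟨p, hp⟩ := exists_mem_filtQ a
  rw [D.fiberMul_eq_sum c hp one_mem_filtQ_zero le_rfl, Finset.sum_range_succ', pow_zero,
    one_smul, D.μ_zero, mul_one, add_eq_right]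
  exact Finset.sum_eq_zero fun i _ => by rw [(D.μ_unital (i + 1) (by omega) a).2, smul_zero]

theorem fiberMul_fiberMul_left_eq_sum {P : ℕ} {a b e : PresAlg Q} (ha : a ∈ filtQ Q P)
    (hb : b ∈ filtQ Q P) (he : e ∈ filtQ Q P) :
    D.fiberMul c (D.fiberMul c a b) e = ∑ n ∈ Finset.range (P + P + P + 1),
      c ^ n • ∑ i ∈ Finset.range (n + 1), D.μ i (D.μ (n - i) a b) e := by
  have hvanish : ∀ i j, P + P + P < i + j → c ^ (i + j) • D.μ i (D.μ j a b) e = 0 := by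
    intro i j hij
    rcases le_or_gt j (P + P) with hj | hj
    · rw [D.μ_eq_zero_of_lt (D.μ_mem_filtQ_sub ha hb j) he (by omega), smul_zero]
    · rw [D.μ_eq_zero_of_lt ha hb hj, map_zero, LinearMap.zero_apply, smul_zero]
  rw [D.fiberMul_eq_sum c (D.fiberMul_mem_filtQ c ha hb) he le_rfl]
  simp_rw [D.fiberMul_eq_sum c ha hb (Nat.le_add_right (P + P) P), map_sum,
    LinearMap.sum_apply, map_smul, LinearMap.smul_apply, Finset.smul_sum,
    smul_smul, ← pow_add]
  rw [sum_range_sum_range_eq_sum_antidiagonal hvanish]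
  exact Finset.sum_congr rfl fun n _ => Finset.sum_congr rfl fun i hi => by
    rw [Nat.add_sub_cancel' (Nat.lt_succ_iff.mp (Finset.mem_range.mp hi))]

theorem fiberMul_fiberMul_right_eq_sum {P : ℕ} {a b e : PresAlg Q} (ha : a ∈ filtQ Q P)
    (hb : b ∈ filtQ Q P) (he : e ∈ filtQ Q P) :
    D.fiberMul c a (D.fiberMul c b e) = ∑ n ∈ Finset.range (P + P + P + 1),
      c ^ n • ∑ i ∈ Finset.range (n + 1), D.μ i a (D.μ (n - i) b e) := by
  have hvanish : ∀ i j, P + P + P < i + j → c ^ (i + j) • D.μ i a (D.μ j b e) = 0 := by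
    intro i j hij
    rcases le_or_gt j (P + P) with hj | hj
    · rw [D.μ_eq_zero_of_lt ha (D.μ_mem_filtQ_sub hb he j) (by omega), smul_zero]
    · rw [D.μ_eq_zero_of_lt hb he hj, map_zero, smul_zero]
  rw [D.fiberMul_eq_sum (N := P + P + P) c ha (D.fiberMul_mem_filtQ c hb he) (by omega)]
  simp_rw [D.fiberMul_eq_sum (N := P + P + P) c hb he (by omega), map_sum, map_smul,
    Finset.smul_sum, smul_smul, ← pow_add]
  rw [sum_range_sum_range_eq_sum_antidiagonal hvanish]
  exact Finset.sum_congr rfl fun n _ => Finset.sum_congr rfl fun i hi => by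
    rw [Nat.add_sub_cancel' (Nat.lt_succ_iff.mp (Finset.mem_range.mp hi))]

theorem fiberMul_assoc (a b e : PresAlg Q) :
    D.fiberMul c (D.fiberMul c a b) e = D.fiberMul c a (D.fiberMul c b e) := by
  obtain ⟨p, ha⟩ := exists_mem_filtQ a
  obtain ⟨q, hb⟩ := exists_mem_filtQ b
  obtain ⟨r, he⟩ := exists_mem_filtQ e
  have ha' := filtQ_mono (show p ≤ p + q + r by omega) ha
  have hb' := filtQ_mono (show q ≤ p + q + r by omega) hb
  have he' := filtQ_mono (show r ≤ p + q + r by omega) he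
  rw [D.fiberMul_fiberMul_left_eq_sum c ha' hb' he', D.fiberMul_fiberMul_right_eq_sum c ha' hb' he']
  simp_rw [D.μ_assoc]

end GradedDeformation

end Deformation

section Fiber

variable {Q : Set (TF k H V)} (D : GradedDeformation Q) (c : k)

namespace GradedDeformation

/-- The fiber `A_t|_{t=c}`. -/
def Fiber (_D : GradedDeformation Q) (_c : k) : Type _ := PresAlg Q

instance : AddCommGroup (D.Fiber c) := inferInstanceAs (AddCommGroup (PresAlg Q))

instance : Module k (D.Fiber c) := inferInstanceAs (Module k (PresAlg Q))

instance : Ring (D.Fiber c) :=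
  { (inferInstance : AddCommGroup (D.Fiber c)) with
    mul := D.fiberMul c
    one := (1 : PresAlg Q)
    mul_assoc := D.fiberMul_assoc c
    one_mul := D.fiberMul_one_left c
    mul_one := D.fiberMul_one_right c
    left_distrib := D.fiberMul_add_right c
    right_distrib := D.fiberMul_add_left c
    zero_mul := D.fiberMul_zero_left c
    mul_zero := D.fiberMul_zero_right c }

instance : Algebra k (D.Fiber c) :=
  Algebra.ofModule (D.fiberMul_smul_left c) (D.fiberMul_smul_right c)

def fiberEquiv : D.Fiber c ≃ₗ[k] PresAlg Q := LinearEquiv.refl k (PresAlg Q)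

def fiberEvalAlgHom : TF k H V →ₐ[k] D.Fiber c :=
  TensorAlgebra.lift k
    ((D.fiberEquiv c).symm.toLinearMap ∘ₗ (presMk Q).toLinearMap ∘ₗ TensorAlgebra.ι k)

def fiberEval : TF k H V →ₗ[k] PresAlg Q :=
  (D.fiberEquiv c).toLinearMap ∘ₗ (D.fiberEvalAlgHom c).toLinearMap

theorem fiberEval_mul (x y : TF k H V) :
    D.fiberEval c (x * y) = D.fiberMul c (D.fiberEval c x) (D.fiberEval c y) := by
  simp only [fiberEval, LinearMap.comp_apply, AlgHom.toLinearMap_apply, map_mul]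
  rfl

theorem fiberEval_one : D.fiberEval c 1 = 1 := by
  simp only [fiberEval, LinearMap.comp_apply, AlgHom.toLinearMap_apply, map_one]
  rfl

theorem fiberEval_ι (p : H × V) :
    D.fiberEval c (TensorAlgebra.ι k p) = presMk Q (TensorAlgebra.ι k p) := by
  simp [fiberEval, fiberEvalAlgHom]

theorem fiberEval_of_mem_HF {x : TF k H V} (hx : x ∈ HF k H V) :
    D.fiberEval c x = presMk Q x := by
  obtain ⟨h, s, rfl⟩ := mem_HF_iff.mp hx
  rw [map_add, map_add, jH, LinearMap.comp_apply, fiberEval_ι, Algebra.algebraMap_eq_smul_one,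
    map_smul, map_smul, fiberEval_one, map_one]

theorem fiberEval_jV (v : V) : D.fiberEval c (jV k H V v) = presMk Q (jV k H V v) :=
  D.fiberEval_ι c (0, v)

def leadingAgree (n : ℕ) : Submodule k (TF k H V) :=
  (filtQ Q n).comap (presMk Q).toLinearMap
    ⊓ (filtPredQ Q n).comap (D.fiberEval c - (presMk Q).toLinearMap)

theorem fiberEval_mem_filtQ_of_mem_leadingAgree {n : ℕ} {x : TF k H V}
    (hx : x ∈ D.leadingAgree c n) : D.fiberEval c x ∈ filtQ Q n := by
  rw [← add_sub_cancel (presMk Q x) (D.fiberEval c x)]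
  exact add_mem hx.1 (filtPredQ_le_filtQ n hx.2)

theorem leadingAgree_mul_le (m n : ℕ) :
    D.leadingAgree c m * D.leadingAgree c n ≤ D.leadingAgree c (m + n) := by
  refine Submodule.mul_le.mpr fun x hx y hy => ⟨?_, ?_⟩
  · simpa using filtQ_mul_filtQ_le m n (Submodule.mul_mem_mul hx.1 hy.1)
  · have hx' := D.fiberEval_mem_filtQ_of_mem_leadingAgree c hx
    have hy' := D.fiberEval_mem_filtQ_of_mem_leadingAgree c hy
    have key : D.fiberEval c (x * y) - presMk Q (x * y)
        = (D.fiberMul c (D.fiberEval c x) (D.fiberEval c y) - D.fiberEval c x * D.fiberEval c y)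
          + (D.fiberEval c x - presMk Q x) * D.fiberEval c y
          + presMk Q x * (D.fiberEval c y - presMk Q y) := by
      rw [fiberEval_mul, map_mul, mul_sub, sub_mul]
      abel
    show D.fiberEval c (x * y) - presMk Q (x * y) ∈ filtPredQ Q (m + n)
    rw [key]
    exact add_mem (add_mem (D.fiberMul_sub_mul_mem_filtPredQ c hx' hy')
      (filtPredQ_mul_filtQ_le m n (Submodule.mul_mem_mul hx.2 hy')))
      (filtQ_mul_filtPredQ_le m n (Submodule.mul_mem_mul hx.1 hy.2))

theorem HF_le_leadingAgree : HF k H V ≤ D.leadingAgree c 0 := fun x hx =>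
  ⟨presMk_mem_filtQ_zero hx, by simp [D.fiberEval_of_mem_HF c hx]⟩

theorem VF_le_leadingAgree : VF k H V ≤ D.leadingAgree c 1 := by
  rintro _ ⟨v, rfl⟩
  exact ⟨presMk_mem_filtQ (gradeF_le_filtF le_rfl (jV_mem_gradeF_one v)),
    by simp [D.fiberEval_jV c v]⟩

theorem gradeF_le_leadingAgree (n : ℕ) : gradeF k H V n ≤ D.leadingAgree c n := by
  induction n with
  | zero => rw [gradeF_zero]; exact D.HF_le_leadingAgree c
  | succ n ih =>
    rw [gradeF_succ, ← mul_assoc]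
    calc gradeF k H V n * VF k H V * HF k H V
        ≤ D.leadingAgree c n * D.leadingAgree c 1 * D.leadingAgree c 0 :=
          mul_le_mul' (mul_le_mul' ih (D.VF_le_leadingAgree c)) (D.HF_le_leadingAgree c)
      _ ≤ D.leadingAgree c (n + 1 + 0) :=
          (mul_le_mul_left (D.leadingAgree_mul_le c n 1) _).trans (D.leadingAgree_mul_le c _ 0)

theorem fiberEval_sub_presMk_mem_filtPredQ {n : ℕ} {x : TF k H V} (hx : x ∈ gradeF k H V n) :
    D.fiberEval c x - presMk Q x ∈ filtPredQ Q n :=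
  (D.gradeF_le_leadingAgree c n hx).2

theorem fiberEval_mem_filtQ_of_mem_gradeF {n : ℕ} {x : TF k H V} (hx : x ∈ gradeF k H V n) :
    D.fiberEval c x ∈ filtQ Q n :=
  D.fiberEval_mem_filtQ_of_mem_leadingAgree c (D.gradeF_le_leadingAgree c n hx)

theorem fiberEval_mem_filtQ {n : ℕ} {x : TF k H V} (hx : x ∈ filtF k H V n) :
    D.fiberEval c x ∈ filtQ Q n :=
  (iSup₂_le fun _ hi _ hy => filtQ_mono hi (D.fiberEval_mem_filtQ_of_mem_gradeF c hy) :
    filtF k H V n ≤ (filtQ Q n).comap (D.fiberEval c)) hx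

theorem fiberEval_mem_filtPredQ {n : ℕ} {x : TF k H V} (hx : x ∈ filtFpred k H V n) :
    D.fiberEval c x ∈ filtPredQ Q n :=
  (iSup₂_le fun _ hi _ hy => filtQ_le_filtPredQ hi (D.fiberEval_mem_filtQ_of_mem_gradeF c hy) :
    filtFpred k H V n ≤ (filtPredQ Q n).comap (D.fiberEval c)) hx

theorem filtQ_le_map_fiberEval_sup (n : ℕ) :
    filtQ Q n ≤ (gradeF k H V n).map (D.fiberEval c) ⊔ filtPredQ Q n := by
  rw [filtQ_eq_filtPredQ_sup_gradeQ]
  refine sup_le le_sup_right ?_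
  rintro _ ⟨g, hg, rfl⟩
  rw [AlgHom.toLinearMap_apply, ← sub_sub_cancel (D.fiberEval c g) (presMk Q g)]
  exact sub_mem (Submodule.mem_sup_left (Submodule.mem_map_of_mem hg))
    (Submodule.mem_sup_right (D.fiberEval_sub_presMk_mem_filtPredQ c hg))

end GradedDeformation

end Fiber

section Perturbation

variable {Q P : Set (TF k H V)}

/-- `P` arises from the homogeneous relations `Q` by adding terms of lower degree. -/
def IsLowerOrderPerturbation (Q P : Set (TF k H V)) : Prop :=
  ∀ q ∈ Q, ∃ d, q ∈ homogOfDeg d ∧ presMk P q ∈ filtPredQ P d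

namespace IsLowerOrderPerturbation

theorem homogSet (hPQ : IsLowerOrderPerturbation Q P) : HomogSet Q :=
  fun q hq => (hPQ q hq).imp fun _ => And.left

theorem presMk_coeff_homogenize_mem (hPQ : IsLowerOrderPerturbation Q P) {z : TF k H V}
    (hz : z ∈ presIdeal Q) (n : ℕ) : presMk P ((homogenize z).coeff n) ∈ filtPredQ P n := by
  obtain ⟨x, hx, y, hy, rfl⟩ := Submodule.mem_sup.mp hz
  clear hz
  rw [map_add, Polynomial.coeff_add, map_add, presMk_eq_zero_of_mem (Submodule.mem_sup_left
    (coeff_homogenize_mem_twoSidedSpan homogSet_baseSet hx n)), zero_add]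
  induction hy using Submodule.span_induction generalizing n with
  | mem x hx =>
    obtain ⟨a, q, b, hq, rfl⟩ := hx
    obtain ⟨d, hd, hlow⟩ := hPQ q hq
    rw [map_mul, map_mul, mem_homogOfDeg_iff.mp hd, ← mul_assoc, Polynomial.coeff_mul, map_sum]
    refine sum_mem fun ij hij => ?_
    rw [Polynomial.coeff_mul_X_pow', Polynomial.coeff_mul_C]
    split_ifs with hdi
    · have := filtPredQ_mul_filtQ_le _ _ <| Submodule.mul_mem_mul
        (filtQ_mul_filtPredQ_le _ _ (Submodule.mul_mem_mul
          (presMk_coeff_homogenize_mem_filtQ a (ij.1 - d)) hlow))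
        (presMk_coeff_homogenize_mem_filtQ b ij.2)
      rwa [Nat.sub_add_cancel hdi, Finset.HasAntidiagonal.mem_antidiagonal.mp hij, ← map_mul,
        ← map_mul] at this
    · rw [zero_mul, map_zero]
      exact zero_mem _
  | zero => simp
  | add x y _ _ hx hy => rw [map_add, Polynomial.coeff_add, map_add]; exact add_mem (hx n) (hy n)
  | smul s x _ hx =>
    rw [map_smul, Polynomial.coeff_smul, map_smul]
    exact Submodule.smul_mem _ _ (hx n)

end IsLowerOrderPerturbation

namespace GradedDeformation

variable (D : GradedDeformation Q) (c : k)

theorem fiberEval_respects_presRel (hP : ∀ x ∈ P, D.fiberEval c x = 0) ⦃x y : TF k H V⦄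
    (h : presRel k H V P x y) : D.fiberEvalAlgHom c x = D.fiberEvalAlgHom c y := by
  change D.fiberEval c x = D.fiberEval c y
  cases h with
  | mulH h h' =>
    rw [fiberEval_mul, D.fiberEval_of_mem_HF c (jH_mem_HF h),
      D.fiberEval_of_mem_HF c (jH_mem_HF h'),
      D.fiberMul_eq_mul_of_mem_filtQ_zero c (presMk_mem_filtQ_zero (jH_mem_HF h))
        (presMk_mem_filtQ_zero (jH_mem_HF h')), ← map_mul, D.fiberEval_of_mem_HF c (jH_mem_HF _)]
    exact RingQuot.mkAlgHom_rel k (presRel.mulH h h')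
  | oneH =>
    rw [D.fiberEval_of_mem_HF c (jH_mem_HF 1), fiberEval_one, RingQuot.mkAlgHom_rel k presRel.oneH,
      map_one]
  | mem hx => rw [hP _ hx, map_zero]

theorem fiberEval_eq_zero_of_mem_presIdeal (hP : ∀ x ∈ P, D.fiberEval c x = 0) {x : TF k H V}
    (hx : x ∈ presIdeal P) : D.fiberEval c x = 0 :=
  (D.fiberEquiv c).map_eq_zero_iff.mpr
    (presIdeal_le_ker (D.fiberEvalAlgHom c) (D.fiberEval_respects_presRel c hP) hx)

theorem fiberEval_eq_of_presMk_eq (hP : ∀ x ∈ P, D.fiberEval c x = 0) {x y : TF k H V}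
    (h : presMk P x = presMk P y) : D.fiberEval c x = D.fiberEval c y := by
  rw [← sub_eq_zero, ← map_sub]
  exact D.fiberEval_eq_zero_of_mem_presIdeal c hP (presMk_eq_presMk_iff.mp h)

/-- Induction on the filtration: the leading part of `y` is a relation of the graded algebra
`A`, hence of lower order in `T_H(W)/(P)`. -/
theorem presMk_eq_zero_of_fiberEval_eq_zero (hPQ : IsLowerOrderPerturbation Q P)
    (hP : ∀ x ∈ P, D.fiberEval c x = 0) {n : ℕ} {y : TF k H V} (hy : y ∈ filtF k H V n)
    (h0 : D.fiberEval c y = 0) : presMk P y = 0 := by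
  induction n using Nat.strong_induction_on generalizing y with
  | _ n ih =>
  rw [filtF_eq_filtFpred_sup_gradeF] at hy
  obtain ⟨u, hu, g, hg, rfl⟩ := Submodule.mem_sup.mp hy
  have hQg : presMk Q g ∈ filtPredQ Q n := by
    rw [map_add] at h0
    have hsplit : presMk Q g = -D.fiberEval c u - (D.fiberEval c g - presMk Q g) := by
      rw [neg_eq_of_add_eq_zero_right h0, sub_sub_cancel]
    rw [hsplit]
    exact sub_mem (neg_mem (D.fiberEval_mem_filtPredQ c hu))
      (D.fiberEval_sub_presMk_mem_filtPredQ c hg)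
  have hPg : presMk P g ∈ filtPredQ P n := by
    simpa [coeff_homogenize_of_mem_gradeF hg] using hPQ.presMk_coeff_homogenize_mem
      (mem_presIdeal_of_presMk_mem_filtPredQ hPQ.homogSet hg hQg) n
  cases n with
  | zero =>
    rw [filtPredQ_zero, Submodule.mem_bot] at hPg
    rw [filtFpred_zero, Submodule.mem_bot] at hu
    rw [hu, zero_add, hPg]
  | succ m =>
    rw [filtPredQ_succ] at hPg
    obtain ⟨y', hy', hy'g⟩ := hPg
    rw [AlgHom.toLinearMap_apply] at hy'g
    rw [filtFpred_succ] at hu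
    rw [map_add, ← hy'g, ← map_add]
    refine ih m m.lt_succ_self (add_mem hu hy') ?_
    rw [map_add, D.fiberEval_eq_of_presMk_eq c hP hy'g, ← map_add, h0]

theorem gradeF_inf_presIdeal_sup_filtFpred_le (hPQ : IsLowerOrderPerturbation Q P)
    (hP : ∀ x ∈ P, D.fiberEval c x = 0) (n : ℕ) :
    gradeF k H V n ⊓ (presIdeal P ⊔ filtFpred k H V n) ≤ presIdeal Q := by
  rintro x ⟨hx, hmix⟩
  obtain ⟨j, hj, f, hf, rfl⟩ := Submodule.mem_sup.mp hmix
  refine mem_presIdeal_of_presMk_mem_filtPredQ hPQ.homogSet hx ?_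
  have hsplit : presMk Q (j + f)
      = D.fiberEval c f - (D.fiberEval c (j + f) - presMk Q (j + f)) := by
    rw [map_add (D.fiberEval c), D.fiberEval_eq_zero_of_mem_presIdeal c hP hj, zero_add,
      sub_sub_cancel]
  rw [hsplit]
  exact sub_mem (D.fiberEval_mem_filtPredQ c hf) (D.fiberEval_sub_presMk_mem_filtPredQ c hx)

theorem map_fiberEval_filtF (n : ℕ) : (filtF k H V n).map (D.fiberEval c) = filtQ Q n := by
  refine le_antisymm (Submodule.map_le_iff_le_comap.mpr fun x hx => D.fiberEval_mem_filtQ c hx) ?_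
  refine (D.filtQ_le_map_fiberEval_sup c n).trans
    (sup_le (Submodule.map_mono (gradeF_le_filtF le_rfl)) ?_)
  induction n with
  | zero => rw [filtPredQ_zero]; exact bot_le
  | succ n ih =>
    rw [filtPredQ_succ]
    refine (D.filtQ_le_map_fiberEval_sup c n).trans (sup_le ?_ ih) |>.trans
      (Submodule.map_mono (filtF_mono n.le_succ))
    exact Submodule.map_mono (gradeF_le_filtF le_rfl)

def fiberDescend (hP : ∀ x ∈ P, D.fiberEval c x = 0) : PresAlg P →ₗ[k] PresAlg Q :=
  (D.fiberEquiv c).toLinearMap ∘ₗ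
    (RingQuot.liftAlgHom k ⟨D.fiberEvalAlgHom c, D.fiberEval_respects_presRel c hP⟩).toLinearMap

variable (hP : ∀ x ∈ P, D.fiberEval c x = 0)

theorem fiberDescend_presMk (x : TF k H V) :
    D.fiberDescend c hP (presMk P x) = D.fiberEval c x := by
  simp only [fiberDescend, LinearMap.comp_apply, AlgHom.toLinearMap_apply,
    RingQuot.liftAlgHom_mkAlgHom_apply]
  rfl

theorem fiberDescend_one : D.fiberDescend c hP 1 = 1 := by
  simp only [fiberDescend, LinearMap.comp_apply, AlgHom.toLinearMap_apply, map_one]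
  rfl

theorem fiberDescend_mul (x y : PresAlg P) : D.fiberDescend c hP (x * y)
    = D.fiberMul c (D.fiberDescend c hP x) (D.fiberDescend c hP y) := by
  simp only [fiberDescend, LinearMap.comp_apply, AlgHom.toLinearMap_apply, map_mul]
  rfl

theorem map_fiberDescend_filtQ (n : ℕ) :
    (filtQ P n).map (D.fiberDescend c hP) = filtQ Q n := by
  rw [filtQ, ← Submodule.map_comp, ← D.map_fiberEval_filtF c n]
  congr 1
  exact LinearMap.ext (D.fiberDescend_presMk c hP)

theorem fiberDescend_bijective (hPQ : IsLowerOrderPerturbation Q P) :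
    Function.Bijective (D.fiberDescend c hP) := by
  refine ⟨(injective_iff_map_eq_zero _).mpr fun z hz => ?_, fun z => ?_⟩
  · obtain ⟨n, y, hy, rfl⟩ := exists_mem_filtQ z
    rw [AlgHom.toLinearMap_apply] at hz ⊢
    rw [fiberDescend_presMk] at hz
    exact D.presMk_eq_zero_of_fiberEval_eq_zero c hPQ hP hy hz
  · obtain ⟨n, hn⟩ := exists_mem_filtQ z
    rw [← D.map_fiberDescend_filtQ c hP n] at hn
    obtain ⟨x, -, rfl⟩ := hn
    exact ⟨x, rfl⟩

theorem exists_filtered_linearEquiv (hPQ : IsLowerOrderPerturbation Q P)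
    (hP : ∀ x ∈ P, D.fiberEval c x = 0) :
    ∃ Θ : PresAlg P ≃ₗ[k] PresAlg Q, Θ 1 = 1 ∧
      (∀ n, (filtQ P n).map Θ.toLinearMap = filtQ Q n) ∧
      ∀ (x y : PresAlg P) (m n : ℕ), Θ x ∈ filtQ Q m → Θ y ∈ filtQ Q n →
        Θ (x * y) = ∑ i ∈ Finset.range (m + n + 1), c ^ i • D.μ i (Θ x) (Θ y) :=
  ⟨.ofBijective _ (D.fiberDescend_bijective c hP hPQ), D.fiberDescend_one c hP,
    D.map_fiberDescend_filtQ c hP, fun x y _ _ hx hy => by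
      rw [LinearEquiv.ofBijective_apply, fiberDescend_mul]
      exact D.fiberMul_eq_sum c hx hy le_rfl⟩

end GradedDeformation

end Perturbation

section LinearQuadratic

variable {R1 : Submodule k (TF k H V)} {R2 : Submodule k (V ⊗[k] V)}

theorem presMk_lqRels_of_mem_R1 {r : TF k H V} (hr : r ∈ R1) :
    presMk (lqRels k H V R1 R2) r = 0 :=
  presMk_eq_zero_iff.mpr (Submodule.mem_sup_right (mem_twoSidedSpan (Or.inl hr)))

theorem presMk_lqRels_iVV_of_mem_R2 {r : V ⊗[k] V} (hr : r ∈ R2) :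
    presMk (lqRels k H V R1 R2) (iVV k H V r) = 0 :=
  presMk_eq_zero_iff.mpr (Submodule.mem_sup_right (mem_twoSidedSpan (Or.inr ⟨r, hr, rfl⟩)))

theorem isLowerOrderPerturbation_lqDefRels (hR1 : R1 ≤ gradeF k H V 1)
    {lam : TF k H V →ₗ[k] TF k H V} {α β : V ⊗[k] V →ₗ[k] TF k H V}
    (hlam : ∀ x, lam x ∈ HF k H V) (hα : ∀ r, α r ∈ gradeF k H V 1)
    (hβ : ∀ r, β r ∈ HF k H V) :
    IsLowerOrderPerturbation (lqRels k H V R1 R2) (lqDefRels k H V R1 R2 lam α β) := by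
  rintro _ (hr | ⟨r, hr, rfl⟩)
  · refine ⟨1, gradeF_le_homogOfDeg 1 (hR1 hr), ?_⟩
    rw [presMk_eq_presMk_of_sub_mem (Or.inl ⟨_, hr, rfl⟩), filtPredQ_succ]
    exact presMk_mem_filtQ_zero (hlam _)
  · refine ⟨2, gradeF_le_homogOfDeg 2 (iVV_mem_gradeF_two r), ?_⟩
    rw [presMk_eq_presMk_of_sub_mem (y := α r + β r) (Or.inr ⟨r, hr, (sub_sub _ _ _).symm⟩),
      filtPredQ_succ]
    refine presMk_mem_filtQ (add_mem (gradeF_le_filtF le_rfl (hα r)) (filtF_mono zero_le_one ?_))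
    rw [filtF_zero]
    exact hβ r

end LinearQuadratic

end

section Field

variable {k H V : Type*} [Field k] [Ring H] [Algebra k H] [AddCommGroup V] [Module k V]
  {R1 : Submodule k (TF k H V)} {R2 : Submodule k (V ⊗[k] V)}
  (D : GradedDeformation (lqRels k H V R1 R2)) (c : k)

theorem exists_lam_fiberEval_eq (hR1 : R1 ≤ gradeF k H V 1) :
    ∃ lam : TF k H V →ₗ[k] TF k H V, (∀ x, lam x ∈ HF k H V) ∧
      ∀ r ∈ R1, D.fiberEval c (lam r) = D.fiberEval c r := by
  obtain ⟨lam, hlam, hlift⟩ := exists_linearMap_lift (presMk _).toLinearMap (HF k H V)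
    (R := R1) (D.fiberEval c) fun r hr => by
      have := D.fiberEval_sub_presMk_mem_filtPredQ c (hR1 hr)
      rwa [presMk_lqRels_of_mem_R1 hr, sub_zero, filtPredQ_succ, filtQ_zero] at this
  exact ⟨lam, hlam, fun r hr => (D.fiberEval_of_mem_HF c (hlam r)).trans (hlift r hr)⟩

theorem exists_alpha_beta_fiberEval_eq :
    ∃ α β : V ⊗[k] V →ₗ[k] TF k H V, (∀ r, α r ∈ gradeF k H V 1) ∧
      (∀ r, β r ∈ HF k H V) ∧
      ∀ r ∈ R2, D.fiberEval c (iVV k H V r) = D.fiberEval c (α r) + D.fiberEval c (β r) := by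
  let Q := lqRels k H V R1 R2
  obtain ⟨α, hα, hαlift⟩ := exists_linearMap_lift ((filtQ Q 0).mkQ ∘ₗ D.fiberEval c)
    (gradeF k H V 1) (R := R2) ((filtQ Q 0).mkQ ∘ₗ D.fiberEval c ∘ₗ iVV k H V)
    fun r hr => by
      have h1 := D.fiberEval_sub_presMk_mem_filtPredQ c (iVV_mem_gradeF_two r)
      rw [presMk_lqRels_iVV_of_mem_R2 hr, sub_zero, filtPredQ_succ] at h1
      obtain ⟨_, ⟨x, hx, rfl⟩, w, hw, hsum⟩ :=
        Submodule.mem_sup.mp (D.filtQ_le_map_fiberEval_sup c 1 h1)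
      refine ⟨x, hx, ?_⟩
      rw [filtPredQ_succ] at hw
      simp only [LinearMap.comp_apply, Submodule.mkQ_apply, ← hsum, Submodule.Quotient.mk_add,
        (Submodule.Quotient.mk_eq_zero _).mpr hw, add_zero]
  obtain ⟨β, hβ, hβlift⟩ := exists_linearMap_lift (presMk Q).toLinearMap (HF k H V) (R := R2)
    (D.fiberEval c ∘ₗ iVV k H V - D.fiberEval c ∘ₗ α) fun r hr => by
      have := hαlift r hr
      simp only [LinearMap.comp_apply, Submodule.mkQ_apply, Submodule.Quotient.eq] at this
      rw [← filtQ_zero]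
      simpa only [LinearMap.sub_apply, LinearMap.comp_apply, neg_sub] using neg_mem this
  refine ⟨α, β, hα, hβ, fun r hr => ?_⟩
  rw [D.fiberEval_of_mem_HF c (hβ r)]
  have := hβlift r hr
  simp only [AlgHom.toLinearMap_apply, LinearMap.sub_apply, LinearMap.comp_apply] at this
  rw [this, add_sub_cancel]

theorem exists_lqDefRels_killed (hR1 : R1 ≤ gradeF k H V 1) :
    ∃ (lam : TF k H V →ₗ[k] TF k H V) (α β : V ⊗[k] V →ₗ[k] TF k H V),
      (∀ x, lam x ∈ HF k H V) ∧ (∀ r, α r ∈ gradeF k H V 1) ∧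
      (∀ r, β r ∈ HF k H V) ∧
      ∀ x ∈ lqDefRels k H V R1 R2 lam α β, D.fiberEval c x = 0 := by
  obtain ⟨lam, hlam, hlamR1⟩ := exists_lam_fiberEval_eq D c hR1
  obtain ⟨α, β, hα, hβ, hαβR2⟩ := exists_alpha_beta_fiberEval_eq D c
  refine ⟨lam, α, β, hlam, hα, hβ, ?_⟩
  rintro _ (⟨r, hr, rfl⟩ | ⟨r, hr, rfl⟩)
  · rw [map_sub, hlamR1 r hr, sub_self]
  · rw [map_sub, map_sub, hαβR2 r hr, add_sub_cancel_left, sub_self]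

end Field

end PaperTH

end

/-- Let `H` be a `k`-algebra, `W` the free `H`-bimodule with basis spanning
`V` (so `T_H(W)` has the presentation `TF/(baseSet)`), and let
`A = T_H(W)/(R̃)` be a linear-quadratic homogeneous algebra, `R̃ ⊆ W ⊕ (W ⊗_H W)`, whose
degree-2 relations lie in `V ⊗ V` — here `R̃₁ = R1 ≤ W` (degree 1) and `R̃₂ = R2 ⊆ V ⊗ V`.
If `A_t` is a graded deformation of `A` (multiplication maps `μ i` of degree `-i`,
associative and unital, with `μ 0` the product of `A`), then for every `c ∈ k` the fiber
`A_t|_{t=c}` is isomorphic, as a filtered algebra, to a strong PBW deformation of `A` of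
the form `T_H(W)/(P)` with `P = (1−α−β)(R̃₂) ∪ (1−λ)(R̃₁)` for some `k`-linear maps
`λ : W → H`, `α : V⊗V → W`, `β : V⊗V → H`. -/
theorem stmt_15 {k H V : Type*} [Field k] [Ring H] [Algebra k H]
    [AddCommGroup V] [Module k V]
    (R1 : Submodule k (TF k H V)) (hR1 : R1 ≤ gradeF k H V 1)
    (R2 : Submodule k (V ⊗[k] V))
    (μ : ℕ → LQAlg k H V R1 R2 →ₗ[k] LQAlg k H V R1 R2 →ₗ[k] LQAlg k H V R1 R2)
    (hμ0 : ∀ a b, μ 0 a b = a * b)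
    (hunital : ∀ i, 1 ≤ i → ∀ a, μ i 1 a = 0 ∧ μ i a 1 = 0)
    (hdeg : ∀ (i m n : ℕ) (a b), a ∈ gradeLQ k H V R1 R2 m → b ∈ gradeLQ k H V R1 R2 n →
      (i ≤ m + n → μ i a b ∈ gradeLQ k H V R1 R2 (m + n - i)) ∧
      (m + n < i → μ i a b = 0))
    (hassoc : ∀ (n : ℕ) (a b c),
      ∑ i ∈ Finset.range (n + 1), μ i (μ (n - i) a b) c
        = ∑ i ∈ Finset.range (n + 1), μ i a (μ (n - i) b c))
    (c : k) :
    ∃ (lam : TF k H V →ₗ[k] TF k H V) (α β : V ⊗[k] V →ₗ[k] TF k H V),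
      (∀ x, lam x ∈ HF k H V) ∧
      (∀ r : V ⊗[k] V, α r ∈ gradeF k H V 1) ∧
      (∀ r : V ⊗[k] V, β r ∈ HF k H V) ∧
      IsStrongPBWofLQ k H V R1 R2 lam α β ∧
      ∃ Θ : LQDefAlg k H V R1 R2 lam α β ≃ₗ[k] LQAlg k H V R1 R2,
        Θ 1 = 1 ∧
        (∀ n, Submodule.map Θ.toLinearMap (filtLQDef k H V R1 R2 lam α β n)
          = filtLQ k H V R1 R2 n) ∧
        (∀ (x y : LQDefAlg k H V R1 R2 lam α β) (m n : ℕ),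
          Θ x ∈ filtLQ k H V R1 R2 m → Θ y ∈ filtLQ k H V R1 R2 n →
          Θ (x * y) = ∑ i ∈ Finset.range (m + n + 1), c ^ i • μ i (Θ x) (Θ y)) := by
  let D : GradedDeformation (lqRels k H V R1 R2) := ⟨μ, hμ0, hunital, hdeg, hassoc⟩
  obtain ⟨lam, α, β, hlam, hα, hβ, hkill⟩ := exists_lqDefRels_killed D c hR1
  have hPQ := isLowerOrderPerturbation_lqDefRels (R2 := R2) hR1 hlam hα hβ
  exact ⟨lam, α, β, hlam, hα, hβ, D.gradeF_inf_presIdeal_sup_filtFpred_le c hPQ hkill,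
    D.exists_filtered_linearEquiv c hPQ hkill⟩
end
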